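/- arXiv:2102.12975 — 7 statements merged into one kernel-verified Lean document; each statement's English description precedes it below -/
import Mathlib

section
/- Let w̄ > 0 and β > 2 be real constants and let i₀ : ℕ → ℝ satisfy i₀(n) ≥ 0 for all n and i₀(n)/n → 0 as n → ∞. Then the sequence (1/n)·∑_{i=1}^{n} w̄·((β−2)/(β−1))·(n/(i+i₀(n)))^{1/(β−1)} converges to w̄ as n → ∞. -/
open Filter

/-- Upper increment bound: `(a+1)^p - a^p ≤ p * a^(p-1)` for `0 < a`, `0 < p ≤ 1`. -/
lemma incr_upper {p a : ℝ} (hp0 : 0 < p) (hp1 : p ≤ 1) (ha : 0 < a) :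
    (a + 1) ^ p ≤ a ^ p + p * a ^ (p - 1) := by
  have h1 : (a + 1) ^ p = a ^ p * (1 + 1 / a) ^ p := by
    rw [← Real.mul_rpow ha.le (by positivity)]
    congr 1
    field_simp
  have h2 : (1 + 1 / a) ^ p ≤ 1 + p * (1 / a) :=
    rpow_one_add_le_one_add_mul_self (by
      have h : (0:ℝ) ≤ 1 / a := by positivity
      linarith) hp0.le hp1
  have h3 : a ^ p * (1 / a) = a ^ (p - 1) := by
    rw [Real.rpow_sub ha, Real.rpow_one]
    ring
  calc (a + 1) ^ p = a ^ p * (1 + 1 / a) ^ p := h1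
    _ ≤ a ^ p * (1 + p * (1 / a)) := by
        have := Real.rpow_nonneg ha.le p
        nlinarith
    _ = a ^ p + p * a ^ (p - 1) := by rw [mul_add, mul_one, ← mul_assoc,
        mul_comm (a ^ p) p, mul_assoc, h3]

/-- Lower increment bound: `(a-1)^p ≤ a^p - p * a^(p-1)` for `1 ≤ a`, `0 < p ≤ 1`. -/
lemma incr_lower {p a : ℝ} (hp0 : 0 < p) (hp1 : p ≤ 1) (ha : 1 ≤ a) :
    (a - 1) ^ p ≤ a ^ p - p * a ^ (p - 1) := by
  have ha0 : 0 < a := lt_of_lt_of_le one_pos ha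
  have h1 : (a - 1) ^ p = a ^ p * (1 + (-(1 / a))) ^ p := by
    rw [← Real.mul_rpow ha0.le (by
      have : 1 / a ≤ 1 := by rw [div_le_one ha0]; exact ha
      linarith)]
    congr 1
    field_simp
    ring
  have h2 : (1 + (-(1 / a))) ^ p ≤ 1 + p * (-(1 / a)) := by
    apply rpow_one_add_le_one_add_mul_self _ hp0.le hp1
    have : 1 / a ≤ 1 := by rw [div_le_one ha0]; exact ha
    linarith
  have h3 : a ^ p * (1 / a) = a ^ (p - 1) := by
    rw [Real.rpow_sub ha0, Real.rpow_one]
    ring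
  calc (a - 1) ^ p = a ^ p * (1 + (-(1 / a))) ^ p := h1
    _ ≤ a ^ p * (1 + p * (-(1 / a))) := by
        have := Real.rpow_nonneg ha0.le p
        nlinarith
    _ = a ^ p - p * a ^ (p - 1) := by
        rw [mul_add, mul_one]
        rw [show a ^ p * (p * -(1 / a)) = -(p * (a ^ p * (1 / a))) by ring, h3]
        ring

/-- Sandwich bounds for the sum `∑_{i=1}^n (i+c)^(p-1)`. -/
lemma sum_bounds {p c : ℝ} (hp0 : 0 < p) (hp1 : p ≤ 1) (hc : 0 ≤ c) (n : ℕ) :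
    ((n : ℝ) + 1 + c) ^ p - (1 + c) ^ p ≤
      p * ∑ i ∈ Finset.Icc 1 n, ((i : ℝ) + c) ^ (p - 1) ∧
    p * ∑ i ∈ Finset.Icc 1 n, ((i : ℝ) + c) ^ (p - 1) ≤ ((n : ℝ) + c) ^ p - c ^ p := by
  have hsum : p * ∑ i ∈ Finset.Icc 1 n, ((i : ℝ) + c) ^ (p - 1)
      = ∑ j ∈ Finset.range n, p * (((j : ℝ) + 1) + c) ^ (p - 1) := by
    rw [Finset.mul_sum]
    rw [show Finset.Icc 1 n = Finset.Ico 1 (n + 1) by rfl]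
    rw [Finset.sum_Ico_eq_sum_range]
    simp only [Nat.add_sub_cancel]
    apply Finset.sum_congr rfl
    intro j _
    push_cast
    ring_nf
  constructor
  · -- lower bound, telescoping g' j = ((j:ℝ)+1+c)^p
    have htel := Finset.sum_range_sub (fun j : ℕ => ((j : ℝ) + 1 + c) ^ p) n
    push_cast [zero_add] at htel
    rw [hsum, ← htel]
    apply Finset.sum_le_sum
    intro j _
    have ha : (0 : ℝ) < (j : ℝ) + 1 + c := by positivity
    have := incr_upper hp0 hp1 ha
    have h1 : ((j : ℝ) + 1 + 1 + c) = ((j : ℝ) + 1 + c) + 1 := by ring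
    rw [h1]
    linarith
  · -- upper bound, telescoping g j = ((j:ℝ)+c)^p
    have htel := Finset.sum_range_sub (fun j : ℕ => ((j : ℝ) + c) ^ p) n
    push_cast [zero_add] at htel
    rw [hsum, ← htel]
    apply Finset.sum_le_sum
    intro j _
    have ha : (1 : ℝ) ≤ (j : ℝ) + 1 + c := by
      have : (0:ℝ) ≤ (j:ℝ) := Nat.cast_nonneg j
      linarith
    have := incr_lower hp0 hp1 ha
    have h1 : ((j : ℝ) + 1 + c) - 1 = (j : ℝ) + c := by ring
    rw [h1] at this
    linarith

theorem statement_0 (wbar β : ℝ) (hwbar : 0 < wbar) (hβ : 2 < β)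
    (i₀ : ℕ → ℝ) (hi₀ : ∀ n, 0 ≤ i₀ n)
    (hlim : Tendsto (fun n : ℕ => i₀ n / n) atTop (nhds 0)) :
    Tendsto (fun n : ℕ => 1 / (n : ℝ) *
        ∑ i ∈ Finset.Icc 1 n,
          wbar * ((β - 2) / (β - 1)) * ((n : ℝ) / ((i : ℝ) + i₀ n)) ^ (1 / (β - 1)))
      atTop (nhds wbar) := by
  set p : ℝ := (β - 2) / (β - 1) with hp_def
  have hβ1 : (0 : ℝ) < β - 1 := by linarith
  have hp0 : 0 < p := div_pos (by linarith) hβ1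
  have hp1 : p < 1 := by
    rw [hp_def, div_lt_one hβ1]; linarith
  have hγ : 1 / (β - 1) = 1 - p := by
    rw [hp_def]; field_simp; ring
  -- the sandwich function
  set B : ℝ → ℝ := fun x => wbar * ((1 + x) ^ p - x ^ p) with hB_def
  have hBcont : Tendsto B (nhds 0) (nhds wbar) := by
    have h1 : Tendsto (fun x : ℝ => (1 + x) ^ p) (nhds 0) (nhds 1) := by
      have : Tendsto (fun x : ℝ => 1 + x) (nhds 0) (nhds 1) := by
        have : Continuous (fun x : ℝ => 1 + x) := by continuity
        simpa using this.tendsto 0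
      have h2 := this.rpow_const (p := p) (Or.inl one_ne_zero)
      simpa using h2
    have h2 : Tendsto (fun x : ℝ => x ^ p) (nhds 0) (nhds 0) := by
      have := (continuous_id.tendsto (0 : ℝ)).rpow_const (p := p) (Or.inr hp0.le)
      simpa [Real.zero_rpow hp0.ne'] using this
    have := ((h1.sub h2).const_mul wbar)
    simpa [hB_def] using this
  have hu : Tendsto (fun n : ℕ => (1 + i₀ n) / n) atTop (nhds 0) := by
    have h1 : Tendsto (fun n : ℕ => 1 / (n : ℝ)) atTop (nhds 0) :=
      tendsto_one_div_atTop_nhds_zero_nat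
    have := h1.add hlim
    simp only [add_zero] at this
    apply this.congr
    intro n
    ring
  have hv := hlim
  have hBu : Tendsto (fun n : ℕ => B ((1 + i₀ n) / n)) atTop (nhds wbar) := hBcont.comp hu
  have hBv : Tendsto (fun n : ℕ => B (i₀ n / n)) atTop (nhds wbar) := hBcont.comp hv
  apply tendsto_of_tendsto_of_tendsto_of_le_of_le' hBu hBv
  · -- lower bound eventually
    filter_upwards [eventually_ge_atTop 1] with n hn
    have hn0 : (0 : ℝ) < n := by exact_mod_cast Nat.pos_of_ne_zero (by omega)
    have hc := hi₀ n
    set c := i₀ n with hc_def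
    -- rewrite f n
    have hnp : (0 : ℝ) < (n : ℝ) ^ p := Real.rpow_pos_of_pos hn0 p
    have hterm : ∀ i ∈ Finset.Icc 1 n,
        wbar * p * ((n : ℝ) / ((i : ℝ) + c)) ^ (1 / (β - 1))
        = wbar * p * (n : ℝ) ^ (1 - p) * ((i : ℝ) + c) ^ (p - 1) := by
      intro i hi
      have hi1 : 1 ≤ i := (Finset.mem_Icc.mp hi).1
      have hic : (0 : ℝ) < (i : ℝ) + c := by
        have : (1 : ℝ) ≤ (i : ℝ) := by exact_mod_cast hi1
        linarith
      rw [hγ, Real.div_rpow hn0.le hic.le]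
      rw [show ((i : ℝ) + c) ^ (1 - p) = (((i : ℝ) + c) ^ (p - 1))⁻¹ by
        rw [← Real.rpow_neg hic.le]; norm_num]
      field_simp
    have hfn : 1 / (n : ℝ) * ∑ i ∈ Finset.Icc 1 n,
        wbar * p * ((n : ℝ) / ((i : ℝ) + c)) ^ (1 / (β - 1))
        = wbar * (p * ∑ i ∈ Finset.Icc 1 n, ((i : ℝ) + c) ^ (p - 1)) / (n : ℝ) ^ p := by
      rw [Finset.sum_congr rfl hterm, ← Finset.mul_sum]
      rw [show (n : ℝ) ^ (1 - p) = (n : ℝ) / (n : ℝ) ^ p by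
        rw [Real.rpow_sub hn0, Real.rpow_one]]
      field_simp
    rw [hfn]
    have hbound := (sum_bounds hp0 hp1.le hc n).1
    have hBeq : B ((1 + c) / n)
        = wbar * (((n : ℝ) + 1 + c) ^ p - (1 + c) ^ p) / (n : ℝ) ^ p := by
      rw [hB_def]
      simp only []
      rw [show (1 : ℝ) + (1 + c) / n = ((n : ℝ) + 1 + c) / n by field_simp; ring]
      rw [Real.div_rpow (by linarith) hn0.le, Real.div_rpow (by linarith) hn0.le]
      field_simp
    rw [hBeq]
    apply div_le_div_of_nonneg_right _ hnp.le
    exact mul_le_mul_of_nonneg_left hbound hwbar.le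
  · -- upper bound eventually
    filter_upwards [eventually_ge_atTop 1] with n hn
    have hn0 : (0 : ℝ) < n := by exact_mod_cast Nat.pos_of_ne_zero (by omega)
    have hc := hi₀ n
    set c := i₀ n with hc_def
    have hnp : (0 : ℝ) < (n : ℝ) ^ p := Real.rpow_pos_of_pos hn0 p
    have hterm : ∀ i ∈ Finset.Icc 1 n,
        wbar * p * ((n : ℝ) / ((i : ℝ) + c)) ^ (1 / (β - 1))
        = wbar * p * (n : ℝ) ^ (1 - p) * ((i : ℝ) + c) ^ (p - 1) := by
      intro i hi
      have hi1 : 1 ≤ i := (Finset.mem_Icc.mp hi).1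
      have hic : (0 : ℝ) < (i : ℝ) + c := by
        have : (1 : ℝ) ≤ (i : ℝ) := by exact_mod_cast hi1
        linarith
      rw [hγ, Real.div_rpow hn0.le hic.le]
      rw [show ((i : ℝ) + c) ^ (1 - p) = (((i : ℝ) + c) ^ (p - 1))⁻¹ by
        rw [← Real.rpow_neg hic.le]; norm_num]
      field_simp
    have hfn : 1 / (n : ℝ) * ∑ i ∈ Finset.Icc 1 n,
        wbar * p * ((n : ℝ) / ((i : ℝ) + c)) ^ (1 / (β - 1))
        = wbar * (p * ∑ i ∈ Finset.Icc 1 n, ((i : ℝ) + c) ^ (p - 1)) / (n : ℝ) ^ p := by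
      rw [Finset.sum_congr rfl hterm, ← Finset.mul_sum]
      rw [show (n : ℝ) ^ (1 - p) = (n : ℝ) / (n : ℝ) ^ p by
        rw [Real.rpow_sub hn0, Real.rpow_one]]
      field_simp
    rw [hfn]
    have hbound := (sum_bounds hp0 hp1.le hc n).2
    have hBeq : B (c / n)
        = wbar * (((n : ℝ) + c) ^ p - c ^ p) / (n : ℝ) ^ p := by
      rw [hB_def]
      simp only []
      rw [show (1 : ℝ) + c / n = ((n : ℝ) + c) / n by field_simp]
      rw [Real.div_rpow (by linarith) hn0.le, Real.div_rpow hc hn0.le]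
      field_simp
    rw [hBeq]
    apply div_le_div_of_nonneg_right _ hnp.le
    exact mul_le_mul_of_nonneg_left hbound hwbar.le
end

section
/- Let w̄ > 0 and β > 2 be real constants, let i₀ : ℕ → ℝ satisfy i₀(n) ≥ 0 for all n and i₀(n)/n → 0 as n → ∞, and fix a real constant w ≥ w̄. Then (1/n)·#{ i ∈ {1,…,n} : w̄·((β−2)/(β−1))·(n/(i+i₀(n)))^{1/(β−1)} ≥ w } converges to ((β−2)·w̄/((β−1)·w))^{β−1} as n → ∞. -/
open Filter

theorem statement_1 (wbar β w : ℝ) (hwbar : 0 < wbar) (hβ : 2 < β) (hw : wbar ≤ w)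
    (i₀ : ℕ → ℝ) (hi₀ : ∀ n, 0 ≤ i₀ n)
    (hlim : Tendsto (fun n : ℕ => i₀ n / n) atTop (nhds 0)) :
    Tendsto (fun n : ℕ =>
        ({i : ℕ | i ∈ Finset.Icc 1 n ∧
          w ≤ wbar * ((β - 2) / (β - 1)) * ((n : ℝ) / ((i : ℝ) + i₀ n)) ^ (1 / (β - 1))}.ncard
          : ℝ) / n)
      atTop (nhds (((β - 2) * wbar / ((β - 1) * w)) ^ (β - 1))) := by
  have hβ1 : (0:ℝ) < β - 1 := by linarith
  have hβ1' : β - 1 ≠ 0 := ne_of_gt hβ1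
  have hw0 : 0 < w := lt_of_lt_of_le hwbar hw
  set c : ℝ := wbar * ((β - 2) / (β - 1)) with hc
  have hc0 : 0 < c := mul_pos hwbar (div_pos (by linarith) hβ1)
  set A : ℝ := ((β - 2) * wbar / ((β - 1) * w)) ^ (β - 1) with hA
  have hcwA : (c / w) ^ (β - 1) = A := by
    rw [hA, hc]
    congr 1
    field_simp
  have hA0 : 0 < A := by
    rw [← hcwA]; exact Real.rpow_pos_of_pos (div_pos hc0 hw0) _
  have hcw1 : c / w < 1 := by
    rw [div_lt_one hw0, hc]
    calc wbar * ((β - 2) / (β - 1)) < wbar * 1 := by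
          apply mul_lt_mul_of_pos_left _ hwbar
          rw [div_lt_one hβ1]; linarith
      _ = wbar := mul_one _
      _ ≤ w := hw
  have hA1 : A < 1 := by
    rw [← hcwA]
    exact Real.rpow_lt_one (le_of_lt (div_pos hc0 hw0)) hcw1 hβ1
  -- x n := n * A - i₀ n
  set x : ℕ → ℝ := fun n => (n : ℝ) * A - i₀ n with hx
  -- key iff
  have key : ∀ n : ℕ, 1 ≤ n → ∀ i : ℕ, 1 ≤ i →
      ((w ≤ c * ((n : ℝ) / ((i : ℝ) + i₀ n)) ^ (1 / (β - 1))) ↔ (i : ℝ) ≤ x n) := by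
    intro n hn i hi
    have hn0 : (0:ℝ) < n := by exact_mod_cast hn
    have hd : (0:ℝ) < (i : ℝ) + i₀ n := by
      have : (1:ℝ) ≤ (i:ℝ) := by exact_mod_cast hi
      have := hi₀ n; linarith
    set d : ℝ := (i : ℝ) + i₀ n with hdd
    have ht : (0:ℝ) < (n : ℝ) / d := div_pos hn0 hd
    have hP : (0:ℝ) < (w / c) ^ (β - 1) := Real.rpow_pos_of_pos (div_pos hw0 hc0) _
    have hPA : (n : ℝ) / (w / c) ^ (β - 1) = (n : ℝ) * A := by
      rw [← hcwA]
      have : (c / w) ^ (β - 1) = ((w / c) ^ (β - 1))⁻¹ := by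
        rw [← Real.inv_rpow (le_of_lt (div_pos hw0 hc0)), inv_div]
      rw [this, div_eq_mul_inv]
    constructor
    · intro h
      have h1 : w / c ≤ ((n : ℝ) / d) ^ (1 / (β - 1)) := by
        rw [div_le_iff₀ hc0, mul_comm]; exact h
      have h2 : (w / c) ^ (β - 1) ≤ (((n : ℝ) / d) ^ (1 / (β - 1))) ^ (β - 1) := by
        rw [Real.rpow_le_rpow_iff (le_of_lt (div_pos hw0 hc0))
          (Real.rpow_nonneg (le_of_lt ht) _) hβ1]
        exact h1
      rw [← Real.rpow_mul (le_of_lt ht), one_div_mul_cancel hβ1', Real.rpow_one] at h2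
      have h3 : d * (w / c) ^ (β - 1) ≤ (n : ℝ) := by
        rw [mul_comm, ← le_div_iff₀ hd]; exact h2
      have h4 : d ≤ (n : ℝ) * A := by
        rw [← hPA, le_div_iff₀ hP]; exact h3
      have hxe : x n = (n:ℝ) * A - i₀ n := rfl
      rw [hxe]; rw [hdd] at h4; linarith
    · intro h
      have hxe : x n = (n:ℝ) * A - i₀ n := rfl
      rw [hxe] at h
      have h4 : d ≤ (n : ℝ) * A := by rw [hdd]; linarith
      have h3 : d * (w / c) ^ (β - 1) ≤ (n : ℝ) := by
        rw [← le_div_iff₀ hP]; rw [hPA]; exact h4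
      have h2 : (w / c) ^ (β - 1) ≤ (n : ℝ) / d := by
        rw [le_div_iff₀ hd, mul_comm]; exact h3
      have h1 : w / c ≤ ((n : ℝ) / d) ^ (1 / (β - 1)) := by
        rw [← Real.rpow_le_rpow_iff (le_of_lt (div_pos hw0 hc0))
          (Real.rpow_nonneg (le_of_lt ht) _) hβ1,
          ← Real.rpow_mul (le_of_lt ht), one_div_mul_cancel hβ1', Real.rpow_one]
        exact h2
      rw [div_le_iff₀ hc0, mul_comm] at h1; exact h1
    -- done key
  -- set cardinality
  have card_eq : ∀ n : ℕ, 1 ≤ n → 0 ≤ x n →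
      ({i : ℕ | i ∈ Finset.Icc 1 n ∧
        w ≤ c * ((n : ℝ) / ((i : ℝ) + i₀ n)) ^ (1 / (β - 1))}.ncard
        = ⌊x n⌋₊) := by
    intro n hn hxn
    have hn0 : (0:ℝ) < n := by exact_mod_cast hn
    have hset : {i : ℕ | i ∈ Finset.Icc 1 n ∧
        w ≤ c * ((n : ℝ) / ((i : ℝ) + i₀ n)) ^ (1 / (β - 1))}
        = ↑(Finset.Icc 1 ⌊x n⌋₊) := by
      ext i
      simp only [Set.mem_setOf_eq, Finset.coe_Icc, Set.mem_Icc, Finset.mem_Icc]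
      constructor
      · rintro ⟨⟨hi1, _⟩, hcond⟩
        exact ⟨hi1, Nat.le_floor ((key n hn i hi1).mp hcond)⟩
      · rintro ⟨hi1, hif⟩
        have hir : (i : ℝ) ≤ x n := le_trans (by exact_mod_cast hif) (Nat.floor_le hxn)
        have hxe : x n = (n:ℝ) * A - i₀ n := rfl
        have hin : i ≤ n := by
          have h1 : (i : ℝ) ≤ (n : ℝ) * A := by
            rw [hxe] at hir; have := hi₀ n; linarith
          have h2 : (n : ℝ) * A < (n : ℝ) := by nlinarith
          exact_mod_cast le_of_lt (lt_of_le_of_lt h1 h2)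
        exact ⟨⟨hi1, hin⟩, (key n hn i hi1).mpr hir⟩
    rw [hset, Set.ncard_coe_finset, Nat.card_Icc]
    omega
  -- limits
  have hnlim : Tendsto (fun n : ℕ => x n / n) atTop (nhds A) := by
    have h1 : Tendsto (fun n : ℕ => A - i₀ n / n) atTop (nhds A) := by
      have := tendsto_const_nhds.sub hlim (α := ℕ) (f := fun _ : ℕ => A)
      simpa using this
    apply h1.congr'
    filter_upwards [eventually_ge_atTop 1] with n hn
    have hn0 : (n:ℝ) ≠ 0 := by positivity
    rw [hx]; field_simp
  have hxpos : ∀ᶠ n : ℕ in atTop, 0 ≤ x n := by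
    have hev : ∀ᶠ n : ℕ in atTop, A / 2 < x n / n :=
      hnlim.eventually_const_lt (by linarith)
    filter_upwards [hev, eventually_ge_atTop 1] with n h1 h2
    have hn0 : (0:ℝ) < n := by exact_mod_cast h2
    have : 0 ≤ x n / n := le_of_lt (lt_of_lt_of_le (by linarith) (le_of_eq rfl))
    calc (0:ℝ) = 0 * n := by ring
      _ ≤ (x n / n) * n := by apply mul_le_mul_of_nonneg_right this (le_of_lt hn0)
      _ = x n := by field_simp
  -- floor limit
  have hfloor : Tendsto (fun n : ℕ => (⌊x n⌋₊ : ℝ) / n) atTop (nhds A) := by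
    have hlower : Tendsto (fun n : ℕ => x n / n - 1 / n) atTop (nhds A) := by
      have := hnlim.sub (tendsto_one_div_atTop_nhds_zero_nat)
      simpa using this
    refine tendsto_of_tendsto_of_tendsto_of_le_of_le' hlower hnlim ?_ ?_
    · filter_upwards [hxpos, eventually_ge_atTop 1] with n hxn hn
      have hn0 : (0:ℝ) < n := by exact_mod_cast hn
      have h1 : x n - 1 ≤ (⌊x n⌋₊ : ℝ) := by
        have := Nat.lt_floor_add_one (x n); linarith
      rw [div_sub_div_same]
      exact div_le_div_of_nonneg_right h1 hn0.le
    · filter_upwards [hxpos, eventually_ge_atTop 1] with n hxn hn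
      have hn0 : (0:ℝ) < n := by exact_mod_cast hn
      exact div_le_div_of_nonneg_right (Nat.floor_le hxn) hn0.le
  apply hfloor.congr'
  filter_upwards [hxpos, eventually_ge_atTop 1] with n hxn hn
  rw [card_eq n hn hxn]
end

section
/- For every real number r ≥ 0 and every real number x with 0 < x < 1 and r·x ≤ 1, one has r·log(1−x) ≤ log(1 − r·x/2). -/
theorem statement_2 (r x : ℝ) (hr : 0 ≤ r) (hx0 : 0 < x) (hx1 : x < 1) (hrx : r * x ≤ 1) :
    r * Real.log (1 - x) ≤ Real.log (1 - r * x / 2) := by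
  have ht0 : 0 ≤ r * x := mul_nonneg hr hx0.le
  have h1 : Real.log (1 - x) ≤ -x := by
    have := Real.log_le_sub_one_of_pos (show (0:ℝ) < 1 - x by linarith)
    linarith
  have h2 : r * Real.log (1 - x) ≤ -(r * x) := by
    have := mul_le_mul_of_nonneg_left h1 hr
    nlinarith
  have hpos : (0:ℝ) < 1 + r * x := by linarith
  have h3 : Real.log (1 + r * x) ≤ r * x := by
    have := Real.log_le_sub_one_of_pos hpos
    linarith
  have h4 : (1 + r * x)⁻¹ ≤ 1 - r * x / 2 := by
    rw [inv_le_iff_one_le_mul₀ hpos]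
    nlinarith
  have h5 : Real.log (1 + r * x)⁻¹ ≤ Real.log (1 - r * x / 2) :=
    Real.log_le_log (by positivity) h4
  rw [Real.log_inv] at h5
  linarith
end

section
/- Let m and N be natural numbers with m ≤ N, let p ∈ [0,1], and let X be a random variable with the binomial distribution with m trials and success probability p. Then for every real λ > 0, P(X ≥ 2·N·p + 4·λ/3) ≤ exp(−λ). -/
lemma e34_le : Real.exp (3/4) ≤ 5/2 := by
  have h1 : Real.exp 1 < 2.7182818286 := Real.exp_one_lt_d9
  have h0 := Real.exp_pos 1
  have h3 : Real.exp (3/4) ^ 4 = Real.exp 3 := by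
    rw [← Real.exp_nat_mul]; norm_num
  have h4 : Real.exp 3 = Real.exp 1 ^ 3 := by
    rw [← Real.exp_nat_mul]; norm_num
  have h2 : Real.exp 1 ^ 3 < 2.7182818286 ^ 3 :=
    pow_lt_pow_left₀ h1 h0.le (by norm_num)
  have h5 : Real.exp (3/4) ^ 4 < (5/2)^4 := by
    rw [h3, h4]; nlinarith
  exact le_of_lt (lt_of_pow_lt_pow_left₀ 4 (by norm_num) h5)

lemma real_bound (m N : ℕ) (hmN : m ≤ N) (p : ℝ) (hp0 : 0 ≤ p) (hp1 : p ≤ 1)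
    (lam : ℝ) :
    Real.exp (-(3/4) * (2 * (N:ℝ) * p + 4 * lam / 3)) * (p * Real.exp (3/4) + (1-p))^m
      ≤ Real.exp (-lam) := by
  have he := Real.exp_pos (3/4 : ℝ)
  have hbase : p * Real.exp (3/4) + (1-p) ≤ Real.exp (p * (Real.exp (3/4) - 1)) := by
    have := Real.add_one_le_exp (p * (Real.exp (3/4) - 1))
    nlinarith
  have hbase0 : (0:ℝ) ≤ p * Real.exp (3/4) + (1-p) := by nlinarith
  have hpow : (p * Real.exp (3/4) + (1-p))^m ≤ Real.exp ((m:ℝ) * (p * (Real.exp (3/4) - 1))) := by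
    calc (p * Real.exp (3/4) + (1-p))^m ≤ Real.exp (p * (Real.exp (3/4) - 1)) ^ m :=
          pow_le_pow_left₀ hbase0 hbase m
      _ = Real.exp ((m:ℝ) * (p * (Real.exp (3/4) - 1))) := (Real.exp_nat_mul _ m).symm
  calc Real.exp (-(3/4) * (2 * (N:ℝ) * p + 4 * lam / 3)) * (p * Real.exp (3/4) + (1-p))^m
      ≤ Real.exp (-(3/4) * (2 * (N:ℝ) * p + 4 * lam / 3)) *
        Real.exp ((m:ℝ) * (p * (Real.exp (3/4) - 1))) :=
        mul_le_mul_of_nonneg_left hpow (le_of_lt (Real.exp_pos _))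
    _ = Real.exp (-(3/4) * (2 * (N:ℝ) * p + 4 * lam / 3) + (m:ℝ) * (p * (Real.exp (3/4) - 1))) :=
        (Real.exp_add _ _).symm
    _ ≤ Real.exp (-lam) := by
        apply Real.exp_le_exp.mpr
        have hE : Real.exp (3/4) ≤ 5/2 := e34_le
        have hm : (m:ℝ) ≤ (N:ℝ) := Nat.cast_le.mpr hmN
        have hN0 : (0:ℝ) ≤ (m:ℝ) := Nat.cast_nonneg m
        nlinarith [mul_nonneg hN0 hp0, mul_le_mul_of_nonneg_right hm hp0]

theorem statement_3 (m N : ℕ) (hmN : m ≤ N) (p : ℝ) (hp0 : 0 ≤ p) (hp1 : p ≤ 1)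
    (lam : ℝ) (hlam : 0 < lam) :
    ((PMF.binomial (Real.toNNReal p) (Real.toNNReal_le_one.mpr hp1) m).map
        (fun k => (k : ℕ))).toMeasure
      {k : ℕ | 2 * (N : ℝ) * p + 4 * lam / 3 ≤ (k : ℝ)} ≤
      ENNReal.ofReal (Real.exp (-lam)) := by
  have hrw : ((PMF.binomial (Real.toNNReal p) (Real.toNNReal_le_one.mpr hp1) m).map
        (fun k => (k : ℕ))) = PMF.map (fun a : Fin (m+1) => (a : ℕ))
        (PMF.binomial (Real.toNNReal p) (Real.toNNReal_le_one.mpr hp1) m) := by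
    show PMF.map id ((PMF.binomial (Real.toNNReal p) (Real.toNNReal_le_one.mpr hp1) m).bind
        (fun a => PMF.pure (a : ℕ))) = _
    rw [PMF.map_id]
    rfl
  rw [hrw, PMF.toMeasure_map_apply _ _ _ (Measurable.of_discrete) (by measurability),
    PMF.toMeasure_apply_fintype]
  set t : ℝ := 2 * (N : ℝ) * p + 4 * lam / 3 with hT
  clear_value t
  set g : ℕ → ℝ := fun k =>
    (m.choose k : ℝ) * p^k * (1-p)^(m - k) * Real.exp ((3/4) * k - (3/4) * t)
    with hg
  have h1p : (0:ℝ) ≤ 1 - p := by linarith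
  -- pmf value as ofReal
  have hpmf : ∀ i : Fin (m+1),
      PMF.binomial (Real.toNNReal p) (Real.toNNReal_le_one.mpr hp1) m i =
      ENNReal.ofReal ((m.choose i : ℝ) * p^(i:ℕ) * (1-p)^(m - (i:ℕ))) := by
    intro i
    have hN : p.toNNReal ^ (i:ℕ) * (1 - p.toNNReal) ^ (m - (i:ℕ)) * ((m.choose i : ℕ) : NNReal) =
        ((m.choose i : ℝ) * p^(i:ℕ) * (1-p)^(m - (i:ℕ))).toNNReal := by
      apply NNReal.coe_injective
      rw [Real.coe_toNNReal _ (by positivity)]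
      push_cast [NNReal.coe_sub (Real.toNNReal_le_one.mpr hp1), Real.coe_toNNReal _ hp0]
      ring
    rw [PMF.binomial_apply, Fin.val_last, ENNReal.ofReal, ← hN]
    push_cast
    rfl
  -- termwise bound
  have hterm : ∀ i : Fin (m+1),
      ((fun a : Fin (m+1) => (a:ℕ)) ⁻¹' {k : ℕ | t ≤ (k:ℝ)}).indicator
        (PMF.binomial (Real.toNNReal p) (Real.toNNReal_le_one.mpr hp1) m) i ≤
      ENNReal.ofReal (g (i:ℕ)) := by
    intro i
    by_cases hi : i ∈ ((fun a : Fin (m+1) => (a:ℕ)) ⁻¹' {k : ℕ | t ≤ (k:ℝ)})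
    · rw [Set.indicator_of_mem hi, hpmf i]
      apply ENNReal.ofReal_le_ofReal
      simp only [Set.mem_preimage, Set.mem_setOf_eq] at hi
      have h1 : (1:ℝ) ≤ Real.exp ((3/4) * (i:ℕ) - (3/4) * t) := by
        rw [← Real.exp_zero]
        apply Real.exp_le_exp.mpr
        linarith
      have hnn : (0:ℝ) ≤ (m.choose i : ℝ) * p^(i:ℕ) * (1-p)^(m - (i:ℕ)) := by positivity
      calc (m.choose i : ℝ) * p^(i:ℕ) * (1-p)^(m - (i:ℕ))
          = (m.choose i : ℝ) * p^(i:ℕ) * (1-p)^(m - (i:ℕ)) * 1 := by ring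
        _ ≤ g (i:ℕ) := mul_le_mul_of_nonneg_left h1 hnn
    · rw [Set.indicator_of_notMem hi]
      exact zero_le
  -- sum up
  calc ∑ i : Fin (m+1), ((fun a : Fin (m+1) => (a:ℕ)) ⁻¹' {k : ℕ | t ≤ (k:ℝ)}).indicator
        (PMF.binomial (Real.toNNReal p) (Real.toNNReal_le_one.mpr hp1) m) i
      ≤ ∑ i : Fin (m+1), ENNReal.ofReal (g (i:ℕ)) := Finset.sum_le_sum fun i _ => hterm i
    _ = ENNReal.ofReal (∑ i : Fin (m+1), g (i:ℕ)) := by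
        rw [ENNReal.ofReal_sum_of_nonneg]
        intro i _
        have : (0:ℝ) ≤ 1 - p := h1p
        rw [hg]
        positivity
    _ ≤ ENNReal.ofReal (Real.exp (-lam)) := by
        apply ENNReal.ofReal_le_ofReal
        have hsum : ∑ i : Fin (m+1), g (i:ℕ) =
            Real.exp (-(3/4) * t) * (p * Real.exp (3/4) + (1-p))^m := by
          rw [Fin.sum_univ_eq_sum_range (fun k => g k) (m+1)]
          have : ∀ k ∈ Finset.range (m+1), g k =
              Real.exp (-(3/4) * t) * ((p * Real.exp (3/4))^k * (1-p)^(m-k) * (m.choose k : ℝ)) := by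
            intro k _
            rw [hg]
            simp only
            rw [show (3:ℝ)/4 * k - 3/4 * t = -(3/4) * t + (k:ℝ) * (3/4) by ring,
              Real.exp_add, Real.exp_nat_mul, mul_pow]
            ring
          rw [Finset.sum_congr rfl this, ← Finset.mul_sum, ← add_pow]
        rw [hsum, hT]
        exact real_bound m N hmN p hp0 hp1 lam
end

section
/- For every ε > 0 there exists N such that for all n ≥ N: P( for j = 1,2, P_{≥k*} ⊆ P̂_{≥k*}^{G_j} ⊆ P̄_{≥k*} ) ≥ 1 − n^{ε−4}, where P_{≥k*} = { u : w_u ≤ α_{k*−1} }, P̂_{≥k*}^{G_j} = { u : |Γ₁^{G_j}(u)| ≤ (1+δ)·α_{k*−1}·s }, and P̄_{≥k*} = { u : w_u ≤ (1+2δ)·α_{k*−1} }. -/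
open MeasureTheory ProbabilityTheory Filter

noncomputable section

/-- The Chung–Lu weight of vertex `i : Fin n` (representing the index `i+1 ∈ {1,…,n}`),
with `i₀ = n·((β−2)·w̄/((β−1)·w_max(n)))^{β−1}`. -/
def clWeight (wbar β : ℝ) (wmax : ℕ → ℝ) (n : ℕ) (i : Fin n) : ℝ :=
  wbar * ((β - 2) / (β - 1)) *
    ((n : ℝ) / (((i : ℕ) : ℝ) + 1 +
      (n : ℝ) * (((β - 2) * wbar / ((β - 1) * wmax n)) ^ (β - 1)))) ^ (1 / (β - 1))

/-- `α_k = n^γ / 2^k` for an integer `k`. -/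
def alphaZ (γ : ℝ) (n : ℕ) (k : ℤ) : ℝ := (n : ℝ) ^ γ / 2 ^ k

/-- The constant `C = (2^{β−1}−1)·((β−2)·w̄/(β−1))^{β−1}`. -/
def Cconst (wbar β : ℝ) : ℝ := (2 ^ (β - 1) - 1) * ((β - 2) * wbar / (β - 1)) ^ (β - 1)

/-- The constant `κ = (1+2δ)²·2^{5−β}·C/((2^{3−β}−1)·w̄)` with `δ = 1/8`. -/
def kappa (wbar β : ℝ) : ℝ :=
  (1 + 2 * (1/8 : ℝ)) ^ 2 * 2 ^ (5 - β) * Cconst wbar β / ((2 ^ (3 - β) - 1) * wbar)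

/-- `k* = ⌊log₂( n^γ·(C·s²/(192·w̄·log n))^{1/(3−β)} )⌋`. -/
def kstar (wbar β s γ : ℝ) (n : ℕ) : ℤ :=
  ⌊Real.logb 2 ((n : ℝ) ^ γ *
      (Cconst wbar β * s ^ 2 / (192 * wbar * Real.log n)) ^ (1 / (3 - β)))⌋

/-- `K = ⌈γ·log₂ n⌉`, the number of slices. -/
def Kconst (γ : ℝ) (n : ℕ) : ℤ := ⌈γ * Real.logb 2 n⌉

/-- The slice `P_k = { i : α_k ≤ w_i ≤ α_{k−1} }` for `k : ℕ`, with `α_{−1} = +∞` (i.e. for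
`k = 0` there is no upper constraint). -/
def Pslice (wbar β γ : ℝ) (wmax : ℕ → ℝ) (n : ℕ) (k : ℕ) : Set (Fin n) :=
  {i | alphaZ γ n k ≤ clWeight wbar β wmax n i ∧
    ∀ j : ℕ, k = j + 1 → clWeight wbar β wmax n i ≤ alphaZ γ n j}

/-- The slice `P_k = { i : α_k ≤ w_i ≤ α_{k−1} }` for an integer index `k`. -/
def PsliceZ (wbar β γ : ℝ) (wmax : ℕ → ℝ) (n : ℕ) (k : ℤ) : Set (Fin n) :=
  {i | alphaZ γ n k ≤ clWeight wbar β wmax n i ∧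
    clWeight wbar β wmax n i ≤ alphaZ γ n (k - 1)}

/-- The enlarged slice `P̄_k = { i : (1−2δ)·α_k ≤ w_i ≤ (1+2δ)·α_{k−1} }` with `δ = 1/8`
(no upper constraint for `k = 0` since `α_{−1} = +∞`). -/
def PbarSlice (wbar β γ : ℝ) (wmax : ℕ → ℝ) (n : ℕ) (k : ℕ) : Set (Fin n) :=
  {i | (1 - 2 * (1/8 : ℝ)) * alphaZ γ n k ≤ clWeight wbar β wmax n i ∧
    ∀ j : ℕ, k = j + 1 → clWeight wbar β wmax n i ≤ (1 + 2 * (1/8 : ℝ)) * alphaZ γ n j}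

/-- The degree-based slice `P̂_k^G = { u : (1−δ)·α_k·s ≤ |Γ₁^G(u)| ≤ (1+δ)·α_{k−1}·s }`
with `δ = 1/8` (no upper constraint for `k = 0` since `α_{−1} = +∞`). -/
def PhatSlice (γ s : ℝ) {n : ℕ} (G : SimpleGraph (Fin n)) (k : ℕ) : Set (Fin n) :=
  {u | (1 - (1/8 : ℝ)) * alphaZ γ n k * s ≤ ((G.neighborSet u).ncard : ℝ) ∧
    ∀ j : ℕ, k = j + 1 → ((G.neighborSet u).ncard : ℝ) ≤ (1 + (1/8 : ℝ)) * alphaZ γ n j * s}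

/-- The subgraph of `G` induced on the vertex set `V` (kept as a graph on all of `Fin n`:
only edges with both endpoints in `V` are retained, so graph distances between vertices of `V`
agree with those in the induced subgraph). -/
def restrictG {n : ℕ} (G : SimpleGraph (Fin n)) (V : Set (Fin n)) : SimpleGraph (Fin n) where
  Adj u v := G.Adj u v ∧ u ∈ V ∧ v ∈ V
  symm := ⟨fun u v h => ⟨h.1.symm, h.2.2, h.2.1⟩⟩
  loopless := ⟨fun u h => G.loopless.irrefl u h.1⟩

/-- Condition (★):
`n^{γ((3−β)(D−1)+1)} ≤ (C·s·(2^{3−β}−1)/(20·2^{3−β}))·(C·s²/(12·κ²·w̄))^D·n/(log n)^{3−β}`. -/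
def starCond (wbar β s γ : ℝ) (D : ℕ) (n : ℕ) : Prop :=
  (n : ℝ) ^ (γ * ((3 - β) * ((D : ℝ) - 1) + 1)) ≤
    Cconst wbar β * s * (2 ^ (3 - β) - 1) / (20 * 2 ^ (3 - β)) *
      (Cconst wbar β * s ^ 2 / (12 * kappa wbar β ^ 2 * wbar)) ^ D *
      (n : ℝ) / Real.log n ^ (3 - β)

/-- A pair of edge-correlated Chung–Lu random graphs `G 0, G 1` on `{1,…,n}`:
for each unordered pair `e` of distinct vertices there are events `A e`, `B 0 e`, `B 1 e`
with `P(A e) = w_i·w_j/(n·w̄)`, `P(B j e) = s`, the whole family being mutually independent,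
and `G j` has edge set `{e : A e ∩ B j e occurs}`. -/
structure ChungLuPair (wbar β s : ℝ) (wmax : ℕ → ℝ) (n : ℕ)
    (Ω : Type) [MeasurableSpace Ω] where
  μ : Measure Ω
  prob : IsProbabilityMeasure μ
  A : Sym2 (Fin n) → Set Ω
  B : Fin 2 → Sym2 (Fin n) → Set Ω
  Ameas : ∀ e, MeasurableSet (A e)
  Bmeas : ∀ j e, MeasurableSet (B j e)
  hA : ∀ u v : Fin n, u ≠ v →
    μ (A (Sym2.mk u v)) =
      ENNReal.ofReal (clWeight wbar β wmax n u * clWeight wbar β wmax n v / (n * wbar))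
  hB : ∀ (j : Fin 2) (u v : Fin n), u ≠ v → μ (B j (Sym2.mk u v)) = ENNReal.ofReal s
  indep : iIndepSet
    (fun p : Sym2 (Fin n) × Option (Fin 2) => p.2.elim (A p.1) (fun j => B j p.1)) μ
  G : Fin 2 → Ω → SimpleGraph (Fin n)
  hG : ∀ (j : Fin 2) (ω : Ω) (u v : Fin n),
    (G j ω).Adj u v ↔ u ≠ v ∧ ω ∈ A (Sym2.mk u v) ∧ ω ∈ B j (Sym2.mk u v)

/-- A single Chung–Lu random graph on `{1,…,n}` with edge probabilities `w_i·w_j·t/(n·w̄)`,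
independently across unordered pairs of distinct vertices. -/
structure ChungLuSingle (wbar β t : ℝ) (wmax : ℕ → ℝ) (n : ℕ)
    (Ω : Type) [MeasurableSpace Ω] where
  μ : Measure Ω
  prob : IsProbabilityMeasure μ
  E : Sym2 (Fin n) → Set Ω
  Emeas : ∀ e, MeasurableSet (E e)
  hE : ∀ u v : Fin n, u ≠ v →
    μ (E (Sym2.mk u v)) =
      ENNReal.ofReal (clWeight wbar β wmax n u * clWeight wbar β wmax n v * t / (n * wbar))
  indep : iIndepSet E μ
  G : Ω → SimpleGraph (Fin n)
  hG : ∀ (ω : Ω) (u v : Fin n), (G ω).Adj u v ↔ u ≠ v ∧ ω ∈ E (Sym2.mk u v)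

/-- The random sets `S_0 = P_{k*}` and
`S_h = { u ∈ P_{k*+h} : |Γ₁^{G₁}(u) ∩ Γ₁^{G₂}(u) ∩ S_{h−1}| ≥ 3 }` for `h ≥ 1`. -/
def Sset (wbar β γ : ℝ) (wmax : ℕ → ℝ) (n : ℕ) (kst : ℤ)
    (G1 G2 : SimpleGraph (Fin n)) : ℕ → Set (Fin n)
  | 0 => PsliceZ wbar β γ wmax n kst
  | h + 1 => {u | u ∈ PsliceZ wbar β γ wmax n (kst + (h : ℤ) + 1) ∧
      3 ≤ (G1.neighborSet u ∩ G2.neighborSet u ∩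
        Sset wbar β γ wmax n kst G1 G2 h).ncard}


variable {Ω ι : Type*} [DecidableEq ι] [MeasurableSpace Ω] {μ : Measure Ω}

lemma indicator_prod_eq (D : ι → Set Ω) (T : Finset ι) (c : ℝ) (ω : Ω) :
    ∏ v ∈ T, (c * (D v).indicator 1 ω) =
      Set.indicator (⋂ v ∈ (T : Set ι), D v) (fun _ => c ^ T.card) ω := by
  by_cases h : ω ∈ ⋂ v ∈ (T : Set ι), D v
  · rw [Set.indicator_of_mem h]
    simp only [Set.mem_iInter] at h
    rw [Finset.prod_congr rfl (fun v hv => ?_), Finset.prod_const]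
    rw [Set.indicator_of_mem (h v (by exact_mod_cast hv)), Pi.one_apply, mul_one]
  · rw [Set.indicator_of_notMem h]
    simp only [Set.mem_iInter, not_forall] at h
    obtain ⟨v, hvT, hv⟩ := h
    exact Finset.prod_eq_zero (by exact_mod_cast hvT)
      (by rw [Set.indicator_of_notMem hv, mul_zero])

lemma prod_one_add_eq (S : Finset ι) (D : ι → Set Ω) (c : ℝ) (ω : Ω) :
    ∏ v ∈ S, (1 + c * (D v).indicator 1 ω) =
      ∑ T ∈ S.powerset, Set.indicator (⋂ v ∈ (T : Set ι), D v) (fun _ => c ^ T.card) ω := by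
  simp only [add_comm (1:ℝ)]
  rw [Finset.prod_add]
  refine Finset.sum_congr rfl fun T hT => ?_
  rw [Finset.prod_const_one, mul_one]
  exact indicator_prod_eq D T c ω

lemma integral_prod_one_add [IsProbabilityMeasure μ] (S : Finset ι) (D : ι → Set Ω)
    (hm : ∀ v, MeasurableSet (D v)) (p : ι → ℝ)
    (hind : ∀ T ⊆ S, (μ (⋂ v ∈ (T : Set ι), D v)).toReal = ∏ v ∈ T, p v)
    (c : ℝ) :
    ∫ ω, ∏ v ∈ S, (1 + c * (D v).indicator 1 ω) ∂μ = ∏ v ∈ S, (1 + c * p v) := by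
  have hmeasT : ∀ T : Finset ι, MeasurableSet (⋂ v ∈ (T : Set ι), D v) := fun T =>
    MeasurableSet.biInter T.countable_toSet (fun v _ => hm v)
  have hint : ∀ T : Finset ι, Integrable
      (fun ω => Set.indicator (⋂ v ∈ (T : Set ι), D v) (fun _ => c ^ T.card) ω) μ :=
    fun T => (integrable_const _).indicator (hmeasT T)
  calc ∫ ω, ∏ v ∈ S, (1 + c * (D v).indicator 1 ω) ∂μ
      = ∫ ω, ∑ T ∈ S.powerset,
          Set.indicator (⋂ v ∈ (T : Set ι), D v) (fun _ => c ^ T.card) ω ∂μ := by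
        congr 1; funext ω; exact prod_one_add_eq S D c ω
    _ = ∑ T ∈ S.powerset, (μ (⋂ v ∈ (T : Set ι), D v)).toReal * c ^ T.card := by
        rw [integral_finset_sum _ (fun T _ => hint T)]
        refine Finset.sum_congr rfl fun T _ => ?_
        rw [integral_indicator_const _ (hmeasT T)]; simp [smul_eq_mul, measureReal_def]
    _ = ∑ T ∈ S.powerset, (∏ v ∈ T, (c * p v)) * 1 := by
        refine Finset.sum_congr rfl fun T hT => ?_
        rw [hind T (Finset.mem_powerset.mp hT), mul_one, Finset.prod_mul_distrib,
          Finset.prod_const, mul_comm]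
    _ = ∏ v ∈ S, (1 + c * p v) := by
        simp only [add_comm (1:ℝ)]
        rw [Finset.prod_add]
        refine Finset.sum_congr rfl fun T hT => ?_
        rw [Finset.prod_const_one, mul_one]

set_option linter.unusedSectionVars false

lemma markov_ofReal [IsProbabilityMeasure μ] {f : Ω → ℝ} (hf : ∀ ω, 0 ≤ f ω)
    (hfi : Integrable f μ) {ε : ℝ} (hε : 0 < ε) {s : Set Ω} (hs : ∀ ω ∈ s, ε ≤ f ω) :
    μ s ≤ ENNReal.ofReal ((∫ ω, f ω ∂μ) / ε) := by
  have h1 : μ s ≤ μ {ω | ε ≤ f ω} := measure_mono hs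
  have h2 := mul_meas_ge_le_integral_of_nonneg (ae_of_all μ hf) hfi ε
  have h3 : (μ s).toReal ≤ (∫ ω, f ω ∂μ) / ε := by
    rw [le_div_iff₀ hε, mul_comm]
    refine le_trans ?_ h2
    exact mul_le_mul_of_nonneg_left (ENNReal.toReal_mono (measure_ne_top _ _) h1) hε.le
  calc μ s = ENNReal.ofReal (μ s).toReal := (ENNReal.ofReal_toReal (measure_ne_top _ _)).symm
    _ ≤ _ := ENNReal.ofReal_le_ofReal h3

lemma chernoff_bound [IsProbabilityMeasure μ] (S : Finset ι) (D : ι → Set Ω)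
    (hm : ∀ v, MeasurableSet (D v)) (p : ι → ℝ) (hp0 : ∀ v ∈ S, 0 ≤ p v) (hp1 : ∀ v ∈ S, p v ≤ 1)
    (hind : ∀ T ⊆ S, (μ (⋂ v ∈ (T : Set ι), D v)).toReal = ∏ v ∈ T, p v)
    (c : ℝ) (hc : -1 ≤ c) (k : ℝ) (E : Set Ω)
    (hsub : ∀ ω ∈ E, Real.exp k ≤ ∏ v ∈ S, (1 + c * (D v).indicator 1 ω)) :
    μ E ≤ ENNReal.ofReal (Real.exp (c * ∑ v ∈ S, p v - k)) := by
  set f : Ω → ℝ := fun ω => ∏ v ∈ S, (1 + c * (D v).indicator 1 ω) with hfdef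
  have hfactor : ∀ ω, ∀ v ∈ S, (0:ℝ) ≤ 1 + c * (D v).indicator 1 ω := by
    intro ω v _
    by_cases h : ω ∈ D v
    · rw [Set.indicator_of_mem h, Pi.one_apply, mul_one]; linarith
    · rw [Set.indicator_of_notMem h, mul_zero]; norm_num
  have hf : ∀ ω, 0 ≤ f ω := fun ω => Finset.prod_nonneg (hfactor ω)
  have hmeasT : ∀ T : Finset ι, MeasurableSet (⋂ v ∈ (T : Set ι), D v) := fun T =>
    MeasurableSet.biInter T.countable_toSet (fun v _ => hm v)
  have hfi : Integrable f μ := by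
    have : f = fun ω => ∑ T ∈ S.powerset,
        Set.indicator (⋂ v ∈ (T : Set ι), D v) (fun _ => c ^ T.card) ω := by
      funext ω; exact prod_one_add_eq S D c ω
    rw [this]
    exact integrable_finset_sum _ (fun T _ => (integrable_const _).indicator (hmeasT T))
  have hint : ∫ ω, f ω ∂μ = ∏ v ∈ S, (1 + c * p v) := integral_prod_one_add S D hm p hind c
  refine le_trans (markov_ofReal hf hfi (Real.exp_pos k) hsub) (ENNReal.ofReal_le_ofReal ?_)
  rw [hint, div_le_iff₀ (Real.exp_pos k), Real.exp_sub, div_mul_cancel₀ _ (Real.exp_pos k).ne']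
  calc ∏ v ∈ S, (1 + c * p v) ≤ ∏ v ∈ S, Real.exp (c * p v) := by
        refine Finset.prod_le_prod (fun v hv => ?_) (fun v hv => ?_)
        · have := hp1 v hv; have := hp0 v hv; nlinarith [mul_le_mul_of_nonneg_right hc (hp0 v hv)]
        · exact Real.add_one_le_exp _ |>.trans_eq' (by ring_nf)
    _ = Real.exp (∑ v ∈ S, c * p v) := (Real.exp_sum _ _).symm
    _ = Real.exp (c * ∑ v ∈ S, p v) := by rw [Finset.mul_sum]

lemma prod_exp_indicator (S : Finset ι) (D : ι → Set Ω) (t : ℝ) (ω : Ω) :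
    ∏ v ∈ S, (1 + (Real.exp t - 1) * (D v).indicator 1 ω) =
      Real.exp (t * ∑ v ∈ S, (D v).indicator 1 ω) := by
  rw [Finset.mul_sum, Real.exp_sum]
  refine Finset.prod_congr rfl fun v _ => ?_
  by_cases h : ω ∈ D v
  · rw [Set.indicator_of_mem h, Pi.one_apply, mul_one, mul_one]; ring
  · rw [Set.indicator_of_notMem h, mul_zero, mul_zero, Real.exp_zero]; ring

/-- Upper-tail Chernoff bound. -/
lemma chernoff_upper_tail [IsProbabilityMeasure μ] (S : Finset ι) (D : ι → Set Ω)
    (hm : ∀ v, MeasurableSet (D v)) (p : ι → ℝ) (hp0 : ∀ v ∈ S, 0 ≤ p v) (hp1 : ∀ v ∈ S, p v ≤ 1)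
    (hind : ∀ T ⊆ S, (μ (⋂ v ∈ (T : Set ι), D v)).toReal = ∏ v ∈ T, p v)
    (t : ℝ) (ht : 0 ≤ t) (k : ℝ) :
    μ {ω | k ≤ ∑ v ∈ S, (D v).indicator 1 ω} ≤
      ENNReal.ofReal (Real.exp ((Real.exp t - 1) * ∑ v ∈ S, p v - t * k)) := by
  refine chernoff_bound S D hm p hp0 hp1 hind (Real.exp t - 1)
    (by nlinarith [Real.exp_pos t]) (t * k) _ (fun ω hω => ?_)
  rw [prod_exp_indicator]
  exact Real.exp_le_exp.mpr (mul_le_mul_of_nonneg_left hω ht)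

/-- Lower-tail Chernoff bound. -/
lemma chernoff_lower_tail [IsProbabilityMeasure μ] (S : Finset ι) (D : ι → Set Ω)
    (hm : ∀ v, MeasurableSet (D v)) (p : ι → ℝ) (hp0 : ∀ v ∈ S, 0 ≤ p v) (hp1 : ∀ v ∈ S, p v ≤ 1)
    (hind : ∀ T ⊆ S, (μ (⋂ v ∈ (T : Set ι), D v)).toReal = ∏ v ∈ T, p v)
    (t : ℝ) (ht : 0 ≤ t) (k : ℝ) :
    μ {ω | ∑ v ∈ S, (D v).indicator 1 ω ≤ k} ≤
      ENNReal.ofReal (Real.exp ((Real.exp (-t) - 1) * ∑ v ∈ S, p v + t * k)) := by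
  have := chernoff_bound S D hm p hp0 hp1 hind (Real.exp (-t) - 1)
    (by nlinarith [Real.exp_pos (-t)]) (-(t * k))
    {ω | ∑ v ∈ S, (D v).indicator 1 ω ≤ k} (fun ω hω => ?_)
  · simpa [sub_neg_eq_add] using this
  · rw [prod_exp_indicator]
    rw [Real.exp_le_exp, neg_mul]
    exact neg_le_neg (mul_le_mul_of_nonneg_left hω ht)

lemma log_nine_eighths : (23/200:ℝ) ≤ Real.log (9/8) := by
  rw [Real.le_log_iff_exp_le (by norm_num)]
  have h := Real.exp_bound (x := 23/200) (by rw [abs_of_nonneg (by norm_num)]; norm_num)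
    (n := 3) (by norm_num)
  rw [abs_sub_le_iff] at h
  have h1 := h.1
  simp [Finset.sum_range_succ, Nat.factorial] at h1
  rw [abs_of_nonneg (by norm_num : (0:ℝ) ≤ 23/200)] at h1
  nlinarith [h1]

lemma log_ten_ninths : Real.log (10/9) ≤ 11/100 := by
  rw [Real.log_le_iff_le_exp (by norm_num)]
  have h := Real.sum_le_exp_of_nonneg (x := 11/100) (by norm_num) 3
  simp [Finset.sum_range_succ, Nat.factorial] at h
  nlinarith [h]

lemma rpow_mvt {b y : ℝ} (hb0 : 0 < b) (hb1 : b < 1) (hy : 0 < y) :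
    ∃ c ∈ Set.Ioo y (y+1), b * c ^ (b-1) = (y+1)^b - y^b := by
  have hcont : ContinuousOn (fun x : ℝ => x ^ b) (Set.Icc y (y+1)) := by
    intro x hx
    exact (Real.continuousAt_rpow_const x b (Or.inl (by linarith [hx.1]))).continuousWithinAt
  have hderiv : ∀ x ∈ Set.Ioo y (y+1), HasDerivAt (fun x : ℝ => x ^ b) (b * x ^ (b-1)) x := by
    intro x hx
    have := Real.hasDerivAt_rpow_const (x := x) (p := b) (Or.inl (by linarith [hx.1]))
    simpa [mul_comm] using this
  obtain ⟨c, hc, hce⟩ := exists_hasDerivAt_eq_slope (fun x : ℝ => x ^ b)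
    (fun x => b * x ^ (b-1)) (by linarith : y < y + 1) hcont hderiv
  exact ⟨c, hc, by rw [hce]; simp⟩

lemma rpow_tele_upper {b y : ℝ} (hb0 : 0 < b) (hb1 : b < 1) (hy : 0 < y) :
    b * (y+1) ^ (b-1) ≤ (y+1)^b - y^b := by
  obtain ⟨c, hc, hce⟩ := rpow_mvt hb0 hb1 hy
  rw [← hce]
  have : (y+1) ^ (b-1) ≤ c ^ (b-1) :=
    Real.rpow_le_rpow_of_nonpos (by linarith [hc.1]) (hc.2.le) (by linarith)
  nlinarith

lemma rpow_tele_lower {b y : ℝ} (hb0 : 0 < b) (hb1 : b < 1) (hy : 0 < y) :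
    (y+1)^b - y^b ≤ b * y ^ (b-1) := by
  obtain ⟨c, hc, hce⟩ := rpow_mvt hb0 hb1 hy
  rw [← hce]
  have : c ^ (b-1) ≤ y ^ (b-1) :=
    Real.rpow_le_rpow_of_nonpos hy (hc.1.le) (by linarith)
  nlinarith

/-- `i₀` as a real number. -/
def iZero (wbar β : ℝ) (wmax : ℕ → ℝ) (n : ℕ) : ℝ :=
  (n : ℝ) * (((β - 2) * wbar / ((β - 1) * wmax n)) ^ (β - 1))

lemma clWeight_eq (wbar β : ℝ) (wmax : ℕ → ℝ) (n : ℕ) (i : Fin n) :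
    clWeight wbar β wmax n i =
      wbar * ((β - 2) / (β - 1)) *
        ((n : ℝ) / (((i : ℕ) : ℝ) + 1 + iZero wbar β wmax n)) ^ (1 / (β - 1)) := rfl

section weights

variable {wbar β : ℝ} {wmax : ℕ → ℝ} {n : ℕ}

lemma tpos (hβl : 2 < β) (hwbar : 0 < wbar) (hwm : wbar ≤ wmax n) :
    0 < (β - 2) * wbar / ((β - 1) * wmax n) :=
  div_pos (by nlinarith) (by nlinarith)

lemma iZero_pos (hβl : 2 < β) (hwbar : 0 < wbar) (hn : 2 ≤ n) (hwm : wbar ≤ wmax n) :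
    0 < iZero wbar β wmax n := by
  have hN : (0:ℝ) < n := Nat.cast_pos.mpr (by omega)
  exact mul_pos hN (Real.rpow_pos_of_pos (tpos hβl hwbar hwm) _)

lemma clWeight_pos (hβl : 2 < β) (hwbar : 0 < wbar) (hn : 2 ≤ n) (hwm : wbar ≤ wmax n)
    (i : Fin n) : 0 < clWeight wbar β wmax n i := by
  have hN : (0:ℝ) < n := Nat.cast_pos.mpr (by omega)
  have hi0 := iZero_pos hβl hwbar hn hwm
  have hx : (0:ℝ) < ((i : ℕ) : ℝ) + 1 + iZero wbar β wmax n := by positivity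
  rw [clWeight_eq]
  have : (0:ℝ) < (n : ℝ) / (((i : ℕ) : ℝ) + 1 + iZero wbar β wmax n) := div_pos hN hx
  have h2 : (0:ℝ) < (β - 2) / (β - 1) := div_pos (by linarith) (by linarith)
  positivity

lemma clWeight_le_wmax (hβl : 2 < β) (hwbar : 0 < wbar) (hn : 2 ≤ n) (hwm : wbar ≤ wmax n)
    (i : Fin n) : clWeight wbar β wmax n i ≤ wmax n := by
  have hN : (0:ℝ) < n := Nat.cast_pos.mpr (by omega)
  have ht := tpos (n := n) hβl hwbar hwm
  have hi0 := iZero_pos hβl hwbar hn hwm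
  have hx : (0:ℝ) < ((i : ℕ) : ℝ) + 1 + iZero wbar β wmax n := by positivity
  have hβ1 : (0:ℝ) < β - 1 := by linarith
  set t := (β - 2) * wbar / ((β - 1) * wmax n) with hts
  have h1 : (n : ℝ) / (((i : ℕ) : ℝ) + 1 + iZero wbar β wmax n) ≤
      (n : ℝ) / iZero wbar β wmax n := by
    apply div_le_div_of_nonneg_left hN.le hi0
    linarith [Nat.cast_nonneg (i : ℕ) (α := ℝ)]
  have h2 : (n : ℝ) / iZero wbar β wmax n = (t⁻¹) ^ (β - 1) := by
    rw [iZero, Real.inv_rpow ht.le, div_eq_iff (by positivity)]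
    field_simp
    rw [hts]
  have h3 : ((n : ℝ) / iZero wbar β wmax n) ^ (1 / (β - 1)) = t⁻¹ := by
    rw [h2, one_div, Real.rpow_rpow_inv (by positivity) (by linarith)]
  have h4 : ((n : ℝ) / (((i : ℕ) : ℝ) + 1 + iZero wbar β wmax n)) ^ (1 / (β - 1)) ≤ t⁻¹ := by
    rw [← h3]
    exact Real.rpow_le_rpow (by positivity) h1 (by positivity)
  have h5 : wbar * ((β - 2) / (β - 1)) * t⁻¹ = wmax n := by
    have hwmax : 0 < wmax n := lt_of_lt_of_le hwbar hwm
    have e1 : β - 1 ≠ 0 := by linarith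
    have e2 : β - 2 ≠ 0 := by linarith
    have e3 : wbar ≠ 0 := hwbar.ne'
    have e4 : wmax n ≠ 0 := hwmax.ne'
    rw [hts, inv_div]
    field_simp
  rw [clWeight_eq, ← h5]
  have hc : 0 < wbar * ((β - 2) / (β - 1)) := by
    apply mul_pos hwbar (div_pos (by linarith) (by linarith))
  exact mul_le_mul_of_nonneg_left h4 hc.le

end weights


section sums

variable {wbar β : ℝ} {wmax : ℕ → ℝ} {n : ℕ}

lemma sum_rpow_tele_upper {b i0 : ℝ} (hb0 : 0 < b) (hb1 : b < 1) (hi0 : 0 < i0) (n : ℕ) :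
    b * ∑ i ∈ Finset.range n, ((i:ℝ) + 1 + i0) ^ (b - 1) ≤ ((n:ℝ) + i0) ^ b - i0 ^ b := by
  rw [Finset.mul_sum]
  have tele := Finset.sum_range_sub (f := fun i => ((i:ℝ) + i0) ^ b) n
  simp only [Nat.cast_add, Nat.cast_one, Nat.cast_zero, zero_add] at tele
  rw [← tele]
  apply Finset.sum_le_sum
  intro i _
  rw [show (i:ℝ) + 1 + i0 = ((i:ℝ) + i0) + 1 from by ring]
  exact rpow_tele_upper hb0 hb1 (by positivity)

lemma sum_rpow_tele_lower {b i0 : ℝ} (hb0 : 0 < b) (hb1 : b < 1) (hi0 : 0 < i0) (n : ℕ) :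
    ((n:ℝ) + 1 + i0) ^ b - (1 + i0) ^ b ≤
      b * ∑ i ∈ Finset.range n, ((i:ℝ) + 1 + i0) ^ (b - 1) := by
  rw [Finset.mul_sum]
  have tele := Finset.sum_range_sub (f := fun i => ((i:ℝ) + 1 + i0) ^ b) n
  simp only [Nat.cast_add, Nat.cast_one, Nat.cast_zero, zero_add] at tele
  rw [show ((n:ℝ) + 1 + i0) ^ b - (1 + i0) ^ b
      = ∑ i ∈ Finset.range n, ((((i:ℝ)+1) + 1 + i0) ^ b - ((i:ℝ) + 1 + i0) ^ b) from by
    rw [tele]]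
  apply Finset.sum_le_sum
  intro i _
  rw [show (i:ℝ) + 1 + 1 + i0 = ((i:ℝ) + 1 + i0) + 1 from by ring]
  exact rpow_tele_lower hb0 hb1 (by positivity)

lemma bfacts (hβl : 2 < β) (hβu : β < 3) :
    0 < (β-2)/(β-1) ∧ (β-2)/(β-1) < 1 ∧ 1/(β-1) = 1 - (β-2)/(β-1) := by
  have h1 : (0:ℝ) < β - 1 := by linarith
  refine ⟨div_pos (by linarith) h1, ?_, ?_⟩
  · rw [div_lt_one h1]; linarith
  · field_simp
    norm_num

lemma clWeight_term (hβl : 2 < β) (hβu : β < 3) (hwbar : 0 < wbar) (hn : 2 ≤ n)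
    (hwm : wbar ≤ wmax n) (i : Fin n) :
    clWeight wbar β wmax n i = wbar * ((β-2)/(β-1)) * (n:ℝ) ^ (1 - (β-2)/(β-1)) *
      (((i:ℕ):ℝ) + 1 + iZero wbar β wmax n) ^ ((β-2)/(β-1) - 1) := by
  obtain ⟨hb0, hb1, hexp⟩ := bfacts hβl hβu
  have hN : (0:ℝ) < n := Nat.cast_pos.mpr (by omega)
  have hi0 := iZero_pos hβl hwbar hn hwm
  have hx : (0:ℝ) < ((i:ℕ):ℝ) + 1 + iZero wbar β wmax n := by positivity
  rw [clWeight_eq, hexp, Real.div_rpow hN.le hx.le]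
  rw [show (β-2)/(β-1) - 1 = -(1 - (β-2)/(β-1)) from by ring, Real.rpow_neg hx.le]
  ring

lemma sum_clWeight_upper (hβl : 2 < β) (hβu : β < 3) (hwbar : 0 < wbar) (hn : 2 ≤ n)
    (hwm : wbar ≤ wmax n) :
    ∑ v : Fin n, clWeight wbar β wmax n v ≤ wbar * ((n:ℝ) + iZero wbar β wmax n) := by
  obtain ⟨hb0, hb1, hexp⟩ := bfacts hβl hβu
  set b := (β-2)/(β-1) with hbdef
  set i0 := iZero wbar β wmax n with hi0def
  have hN : (0:ℝ) < n := Nat.cast_pos.mpr (by omega)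
  have hi0 := iZero_pos hβl hwbar hn hwm
  have hsum : ∑ v : Fin n, clWeight wbar β wmax n v =
      wbar * b * (n:ℝ) ^ (1 - b) * ∑ i ∈ Finset.range n, ((i:ℝ) + 1 + i0) ^ (b - 1) := by
    rw [Finset.mul_sum]
    rw [← Fin.sum_univ_eq_sum_range (fun i => wbar * b * (n:ℝ) ^ (1-b) * ((i:ℝ) + 1 + i0) ^ (b-1)) n]
    exact Finset.sum_congr rfl fun i _ => clWeight_term hβl hβu hwbar hn hwm i
  have htele := sum_rpow_tele_upper (i0 := i0) hb0 hb1 hi0 n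
  have hmul : (n:ℝ) ^ (1 - b) * (((n:ℝ) + i0) ^ b - i0 ^ b) ≤ (n:ℝ) + i0 := by
    have h1 : (n:ℝ) ^ (1 - b) * (((n:ℝ) + i0) ^ b - i0 ^ b) ≤
        (n:ℝ) ^ (1 - b) * ((n:ℝ) + i0) ^ b := by
      apply mul_le_mul_of_nonneg_left _ (Real.rpow_nonneg hN.le _)
      have : (0:ℝ) ≤ i0 ^ b := Real.rpow_nonneg hi0.le _
      linarith
    refine h1.trans ?_
    have h2 : ((n:ℝ) + i0) ^ b = (n:ℝ) ^ b * (1 + i0/(n:ℝ)) ^ b := by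
      rw [← Real.mul_rpow hN.le (by positivity)]
      congr 1
      field_simp
    rw [h2, show (n:ℝ) ^ (1-b) * ((n:ℝ) ^ b * (1 + i0/(n:ℝ)) ^ b)
        = ((n:ℝ) ^ (1-b) * (n:ℝ) ^ b) * (1 + i0/(n:ℝ)) ^ b from by ring,
      ← Real.rpow_add hN, show (1-b)+b = 1 from by ring, Real.rpow_one]
    have h3 : (1 + i0/(n:ℝ)) ^ b ≤ 1 + i0/(n:ℝ) := by
      nth_rewrite 2 [show 1 + i0/(n:ℝ) = (1 + i0/(n:ℝ)) ^ (1:ℝ) from (Real.rpow_one _).symm]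
      have h0 : (0:ℝ) ≤ i0/(n:ℝ) := by positivity
      exact Real.rpow_le_rpow_of_exponent_le (by linarith) hb1.le
    calc (n:ℝ) * (1 + i0/(n:ℝ)) ^ b ≤ (n:ℝ) * (1 + i0/(n:ℝ)) :=
          mul_le_mul_of_nonneg_left h3 hN.le
      _ = (n:ℝ) + i0 := by field_simp
  calc ∑ v : Fin n, clWeight wbar β wmax n v
      = wbar * (n:ℝ) ^ (1-b) * (b * ∑ i ∈ Finset.range n, ((i:ℝ) + 1 + i0) ^ (b-1)) := by
        rw [hsum]; ring
    _ ≤ wbar * (n:ℝ) ^ (1-b) * (((n:ℝ) + i0) ^ b - i0 ^ b) := by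
        apply mul_le_mul_of_nonneg_left htele
        positivity
    _ = wbar * ((n:ℝ) ^ (1-b) * (((n:ℝ) + i0) ^ b - i0 ^ b)) := by ring
    _ ≤ wbar * ((n:ℝ) + i0) := mul_le_mul_of_nonneg_left hmul hwbar.le



lemma sum_clWeight_lower (hβl : 2 < β) (hβu : β < 3) (hwbar : 0 < wbar) (hn : 2 ≤ n)
    (hwm : wbar ≤ wmax n) :
    wbar * (n:ℝ) * (1 - ((1 + iZero wbar β wmax n)/(n:ℝ)) ^ ((β-2)/(β-1))) ≤
      ∑ v : Fin n, clWeight wbar β wmax n v := by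
  obtain ⟨hb0, hb1, hexp⟩ := bfacts hβl hβu
  set b := (β-2)/(β-1) with hbdef
  set i0 := iZero wbar β wmax n with hi0def
  have hN : (0:ℝ) < n := Nat.cast_pos.mpr (by omega)
  have hi0 := iZero_pos hβl hwbar hn hwm
  have hsum : ∑ v : Fin n, clWeight wbar β wmax n v =
      wbar * b * (n:ℝ) ^ (1 - b) * ∑ i ∈ Finset.range n, ((i:ℝ) + 1 + i0) ^ (b - 1) := by
    rw [Finset.mul_sum]
    rw [← Fin.sum_univ_eq_sum_range (fun i => wbar * b * (n:ℝ) ^ (1-b) * ((i:ℝ) + 1 + i0) ^ (b-1)) n]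
    exact Finset.sum_congr rfl fun i _ => clWeight_term hβl hβu hwbar hn hwm i
  have htele := sum_rpow_tele_lower (i0 := i0) hb0 hb1 hi0 n
  have h4 : (n:ℝ) ^ b - (1 + i0) ^ b ≤ ((n:ℝ) + 1 + i0) ^ b - (1 + i0) ^ b := by
    have : (n:ℝ) ^ b ≤ ((n:ℝ) + 1 + i0) ^ b :=
      Real.rpow_le_rpow hN.le (by linarith) hb0.le
    linarith
  have hmul : wbar * (n:ℝ) * (1 - ((1 + i0)/(n:ℝ)) ^ b) ≤
      wbar * (n:ℝ) ^ (1-b) * ((n:ℝ) ^ b - (1 + i0) ^ b) := by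
    have key : (n:ℝ) ^ (1-b) * ((n:ℝ) ^ b - (1 + i0) ^ b)
        = (n:ℝ) - (n:ℝ) ^ (1-b) * (1 + i0) ^ b := by
      rw [mul_sub, ← Real.rpow_add hN, show (1-b)+b = 1 from by ring, Real.rpow_one]
    have key2 : (n:ℝ) ^ (1-b) * (1 + i0) ^ b = (n:ℝ) * ((1 + i0)/(n:ℝ)) ^ b := by
      rw [Real.div_rpow (by positivity) hN.le]
      rw [show (1-b) = 1 + (-b) from by ring, Real.rpow_add hN, Real.rpow_one,
        Real.rpow_neg hN.le]
      field_simp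
    rw [show wbar * (n:ℝ)^(1-b) * ((n:ℝ)^b - (1+i0)^b)
        = wbar * ((n:ℝ)^(1-b) * ((n:ℝ)^b - (1+i0)^b)) from by ring, key, key2]
    nlinarith [Real.rpow_nonneg (show (0:ℝ) ≤ (1+i0)/(n:ℝ) from by positivity) b]
  refine hmul.trans ?_
  calc wbar * (n:ℝ) ^ (1-b) * ((n:ℝ) ^ b - (1 + i0) ^ b)
      ≤ wbar * (n:ℝ) ^ (1-b) * (((n:ℝ) + 1 + i0) ^ b - (1 + i0) ^ b) := by
        apply mul_le_mul_of_nonneg_left h4; positivity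
    _ ≤ wbar * (n:ℝ) ^ (1-b) * (b * ∑ i ∈ Finset.range n, ((i:ℝ) + 1 + i0) ^ (b-1)) := by
        apply mul_le_mul_of_nonneg_left htele; positivity
    _ = ∑ v : Fin n, clWeight wbar β wmax n v := by rw [hsum]; ring

end sums


section prob

variable {wbar β s γ : ℝ} {wmax : ℕ → ℝ} {n : ℕ} {Ωn : Type} [MeasurableSpace Ωn]

/-- The edge events incident to `u` in graph `j`. -/
def Dset (M : ChungLuPair wbar β s wmax n Ωn) (j : Fin 2) (u v : Fin n) : Set Ωn :=
  M.A (Sym2.mk u v) ∩ M.B j (Sym2.mk u v)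

lemma Dset_meas (M : ChungLuPair wbar β s wmax n Ωn) (j : Fin 2) (u v : Fin n) :
    MeasurableSet (Dset M j u v) := (M.Ameas _).inter (M.Bmeas _ _)

lemma pair_prod_formula (M : ChungLuPair wbar β s wmax n Ωn) (j : Fin 2) (u : Fin n)
    (hβl : 2 < β) (hwbar : 0 < wbar) (hn : 2 ≤ n) (hwm : wbar ≤ wmax n) (hs0 : 0 ≤ s) :
    ∀ T ⊆ Finset.univ.erase u,
      (M.μ (⋂ v ∈ (T : Set (Fin n)), Dset M j u v)).toReal =
        ∏ v ∈ T, (clWeight wbar β wmax n u * clWeight wbar β wmax n v / ((n:ℝ) * wbar) * s) := by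
  intro T hT
  have hne : ∀ v ∈ T, u ≠ v := by
    intro v hv
    exact fun h => (Finset.ne_of_mem_erase (hT hv)) h.symm
  classical
  set F : Sym2 (Fin n) × Option (Fin 2) → Set Ωn :=
    fun p => p.2.elim (M.A p.1) (fun j' => M.B j' p.1) with hF
  set T1 : Finset (Sym2 (Fin n) × Option (Fin 2)) :=
    T.image (fun v => (Sym2.mk u v, (none : Option (Fin 2)))) with hT1
  set T2 : Finset (Sym2 (Fin n) × Option (Fin 2)) :=
    T.image (fun v => (Sym2.mk u v, (some j : Option (Fin 2)))) with hT2
  have hinj : ∀ x ∈ T, ∀ y ∈ T, Sym2.mk u x = Sym2.mk u y → x = y := by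
    intro x hx y hy h
    rcases Sym2.eq_iff.mp h with ⟨_, h2⟩ | ⟨h1, h2⟩
    · exact h2
    · exact absurd h2.symm (hne x hx)
  have hdisj : Disjoint T1 T2 := by
    rw [Finset.disjoint_left]
    rintro q hq1 hq2
    rw [hT1, Finset.mem_image] at hq1
    rw [hT2, Finset.mem_image] at hq2
    obtain ⟨x, _, rfl⟩ := hq1
    obtain ⟨y, _, hy⟩ := hq2
    exact absurd (congrArg Prod.snd hy) (by simp)
  have hsets : (⋂ q ∈ T1 ∪ T2, F q) =
      ⋂ v ∈ (T : Set (Fin n)), Dset M j u v := by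
    ext ω
    simp only [Set.mem_iInter, Finset.mem_coe, Finset.mem_union, hT1, hT2,
      Finset.mem_image, Dset, Set.mem_inter_iff]
    constructor
    · intro h v hv
      have h1 := h _ (Or.inl ⟨v, hv, rfl⟩)
      have h2 := h _ (Or.inr ⟨v, hv, rfl⟩)
      exact ⟨h1, h2⟩
    · rintro h q (⟨v, hv, rfl⟩ | ⟨v, hv, rfl⟩)
      · exact (h v hv).1
      · exact (h v hv).2
  have hmeas : M.μ (⋂ v ∈ (T : Set (Fin n)), Dset M j u v) = ∏ q ∈ T1 ∪ T2, M.μ (F q) := by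
    rw [← hsets]; exact M.indep.meas_biInter (T1 ∪ T2)
  rw [hmeas, Finset.prod_union hdisj, hT1, hT2,
    Finset.prod_image (fun x hx y hy h => hinj x hx y hy (congrArg Prod.fst h)),
    Finset.prod_image (fun x hx y hy h => hinj x hx y hy (congrArg Prod.fst h))]
  have hA : ∀ v ∈ T, F (Sym2.mk u v, none) =
      M.A (Sym2.mk u v) := fun v _ => rfl
  have hB : ∀ v ∈ T, F (Sym2.mk u v, some j) = M.B j (Sym2.mk u v) := fun v _ => rfl
  rw [← Finset.prod_mul_distrib]
  rw [ENNReal.toReal_prod]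
  refine Finset.prod_congr rfl fun v hv => ?_
  rw [hA v hv, hB v hv, M.hA u v (hne v hv), M.hB j u v (hne v hv), ENNReal.toReal_mul,
    ENNReal.toReal_ofReal ?_, ENNReal.toReal_ofReal hs0]
  have h1 := clWeight_pos hβl hwbar hn hwm u
  have h2 := clWeight_pos hβl hwbar hn hwm v
  have hN : (0:ℝ) < n := Nat.cast_pos.mpr (by omega)
  positivity

end prob


section prob2

variable {wbar β s γ : ℝ} {wmax : ℕ → ℝ} {n : ℕ} {Ωn : Type} [MeasurableSpace Ωn]

lemma deg_eq_sum (M : ChungLuPair wbar β s wmax n Ωn) (j : Fin 2) (u : Fin n) (ω : Ωn) :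
    (((M.G j ω).neighborSet u).ncard : ℝ) =
      ∑ v ∈ Finset.univ.erase u, (Dset M j u v).indicator 1 ω := by
  classical
  have hset : (M.G j ω).neighborSet u =
      ↑((Finset.univ.erase u).filter (fun v => ω ∈ Dset M j u v)) := by
    ext v
    simp only [SimpleGraph.mem_neighborSet, M.hG, Finset.coe_filter, Set.mem_setOf_eq,
      Finset.mem_erase, Finset.mem_univ, Dset, Set.mem_inter_iff, true_and, and_true]
    constructor
    · rintro ⟨h1, h2, h3⟩; exact ⟨h1.symm, h2, h3⟩
    · rintro ⟨h1, h2, h3⟩; exact ⟨h1.symm, h2, h3⟩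
  rw [hset, Set.ncard_coe_finset]
  have : ∀ v ∈ Finset.univ.erase u, (Dset M j u v).indicator (1 : Ωn → ℝ) ω =
      if ω ∈ Dset M j u v then 1 else 0 := by
    intro v _; rw [Set.indicator_apply]; split <;> simp
  rw [Finset.sum_congr rfl this, Finset.sum_boole]

lemma prob_le_one (M : ChungLuPair wbar β s wmax n Ωn) (j : Fin 2) (u v : Fin n)
    (hβl : 2 < β) (hwbar : 0 < wbar) (hn : 2 ≤ n) (hwm : wbar ≤ wmax n)
    (hwmsq : wmax n ≤ Real.sqrt ((n:ℝ) * wbar)) (hs0 : 0 < s) (hs1 : s ≤ 1) :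
    clWeight wbar β wmax n u * clWeight wbar β wmax n v / ((n:ℝ) * wbar) * s ≤ 1 := by
  have hN : (0:ℝ) < n := Nat.cast_pos.mpr (by omega)
  have hNw : (0:ℝ) < (n:ℝ) * wbar := by positivity
  have hsq : wmax n * wmax n ≤ (n:ℝ) * wbar := by
    have h1 := Real.sq_sqrt hNw.le
    have h2 : (0:ℝ) ≤ wmax n := le_trans hwbar.le hwm
    nlinarith [Real.sqrt_nonneg ((n:ℝ) * wbar)]
  have h1 := clWeight_pos hβl hwbar hn hwm u
  have h2 := clWeight_pos hβl hwbar hn hwm v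
  have h3 := clWeight_le_wmax hβl hwbar hn hwm u
  have h4 := clWeight_le_wmax hβl hwbar hn hwm v
  rw [div_mul_eq_mul_div, div_le_one hNw]
  have key : clWeight wbar β wmax n u * clWeight wbar β wmax n v ≤ (n:ℝ) * wbar :=
    le_trans (mul_le_mul h3 h4 h2.le (le_trans hwbar.le hwm)) hsq
  nlinarith [mul_le_mul_of_nonneg_right key hs0.le, mul_le_mul_of_nonneg_left hs1 hNw.le]

lemma bad_upper (M : ChungLuPair wbar β s wmax n Ωn) (j : Fin 2) (u : Fin n)
    (hβl : 2 < β) (hwbar : 0 < wbar) (hn : 2 ≤ n) (hwm : wbar ≤ wmax n)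
    (hwmsq : wmax n ≤ Real.sqrt ((n:ℝ) * wbar)) (hs0 : 0 < s) (hs1 : s ≤ 1)
    (hsum : ∑ v ∈ Finset.univ.erase u, clWeight wbar β wmax n v ≤ (251/250) * ((n:ℝ) * wbar))
    {α : ℝ} (hα : 0 ≤ α) (hwu : clWeight wbar β wmax n u ≤ α) :
    M.μ {ω | (1 + (1/8:ℝ)) * α * s < (((M.G j ω).neighborSet u).ncard : ℝ)} ≤
      ENNReal.ofReal (Real.exp (-(α * s) / 2000)) := by
  haveI := M.prob
  classical
  have hN : (0:ℝ) < n := Nat.cast_pos.mpr (by omega)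
  have hNw : (0:ℝ) < (n:ℝ) * wbar := by positivity
  set S := Finset.univ.erase u with hS
  set p : Fin n → ℝ :=
    fun v => clWeight wbar β wmax n u * clWeight wbar β wmax n v / ((n:ℝ) * wbar) * s with hp
  have hp0 : ∀ v ∈ S, 0 ≤ p v := by
    intro v _
    have h1 := clWeight_pos hβl hwbar hn hwm u
    have h2 := clWeight_pos hβl hwbar hn hwm v
    positivity
  have hp1 : ∀ v ∈ S, p v ≤ 1 :=
    fun v _ => prob_le_one M j u v hβl hwbar hn hwm hwmsq hs0 hs1
  have hind := pair_prod_formula M j u hβl hwbar hn hwm hs0.le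
  set t := Real.log (9/8) with htdef
  have ht : (23/200 : ℝ) ≤ t := log_nine_eighths
  have het : Real.exp t = 9/8 := Real.exp_log (by norm_num)
  have hm : ∑ v ∈ S, p v ≤ (251/250) * (α * s) := by
    have hfac : ∑ v ∈ S, p v =
        clWeight wbar β wmax n u * s / ((n:ℝ) * wbar) *
          ∑ v ∈ S, clWeight wbar β wmax n v := by
      rw [Finset.mul_sum]
      exact Finset.sum_congr rfl fun v _ => by rw [hp]; ring
    rw [hfac]
    have h1 := clWeight_pos hβl hwbar hn hwm u
    calc clWeight wbar β wmax n u * s / ((n:ℝ) * wbar) * ∑ v ∈ S, clWeight wbar β wmax n v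
        ≤ clWeight wbar β wmax n u * s / ((n:ℝ) * wbar) * ((251/250) * ((n:ℝ) * wbar)) := by
          apply mul_le_mul_of_nonneg_left hsum; positivity
      _ = (251/250) * (clWeight wbar β wmax n u * s) := by field_simp
      _ ≤ (251/250) * (α * s) := by nlinarith
  have hsub : {ω | (1 + (1/8:ℝ)) * α * s < (((M.G j ω).neighborSet u).ncard : ℝ)} ⊆
      {ω | (1 + (1/8:ℝ)) * α * s ≤ ∑ v ∈ S, (Dset M j u v).indicator 1 ω} := by
    intro ω hω
    rw [Set.mem_setOf_eq, ← deg_eq_sum M j u ω]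
    exact le_of_lt hω
  refine le_trans (measure_mono hsub) ?_
  refine le_trans (chernoff_upper_tail S (Dset M j u) (Dset_meas M j u) p hp0 hp1 hind t
    (by linarith) ((1 + (1/8:ℝ)) * α * s)) (ENNReal.ofReal_le_ofReal ?_)
  apply Real.exp_le_exp.mpr
  rw [het]
  have hαs : 0 ≤ α * s := by positivity
  nlinarith [hm, ht, mul_le_mul_of_nonneg_right ht hαs]

lemma bad_lower (M : ChungLuPair wbar β s wmax n Ωn) (j : Fin 2) (u : Fin n)
    (hβl : 2 < β) (hwbar : 0 < wbar) (hn : 2 ≤ n) (hwm : wbar ≤ wmax n)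
    (hwmsq : wmax n ≤ Real.sqrt ((n:ℝ) * wbar)) (hs0 : 0 < s) (hs1 : s ≤ 1)
    (hsum : (249/250) * ((n:ℝ) * wbar) ≤ ∑ v ∈ Finset.univ.erase u, clWeight wbar β wmax n v)
    {α : ℝ} (hα : 0 ≤ α) (hwu : (1 + 2 * (1/8:ℝ)) * α < clWeight wbar β wmax n u) :
    M.μ {ω | (((M.G j ω).neighborSet u).ncard : ℝ) ≤ (1 + (1/8:ℝ)) * α * s} ≤
      ENNReal.ofReal (Real.exp (-(α * s) / 2000)) := by
  haveI := M.prob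
  classical
  have hN : (0:ℝ) < n := Nat.cast_pos.mpr (by omega)
  have hNw : (0:ℝ) < (n:ℝ) * wbar := by positivity
  set S := Finset.univ.erase u with hS
  set p : Fin n → ℝ :=
    fun v => clWeight wbar β wmax n u * clWeight wbar β wmax n v / ((n:ℝ) * wbar) * s with hp
  have hp0 : ∀ v ∈ S, 0 ≤ p v := by
    intro v _
    have h1 := clWeight_pos hβl hwbar hn hwm u
    have h2 := clWeight_pos hβl hwbar hn hwm v
    positivity
  have hp1 : ∀ v ∈ S, p v ≤ 1 :=
    fun v _ => prob_le_one M j u v hβl hwbar hn hwm hwmsq hs0 hs1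
  have hind := pair_prod_formula M j u hβl hwbar hn hwm hs0.le
  set t := Real.log (10/9) with htdef
  have ht : t ≤ 11/100 := log_ten_ninths
  have ht0 : 0 ≤ t := Real.log_nonneg (by norm_num)
  have het : Real.exp (-t) = 9/10 := by
    rw [Real.exp_neg, Real.exp_log (by norm_num)]; norm_num
  have hm : (249/250) * ((1 + 2 * (1/8:ℝ)) * (α * s)) ≤ ∑ v ∈ S, p v := by
    have hfac : ∑ v ∈ S, p v =
        clWeight wbar β wmax n u * s / ((n:ℝ) * wbar) *
          ∑ v ∈ S, clWeight wbar β wmax n v := by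
      rw [Finset.mul_sum]
      exact Finset.sum_congr rfl fun v _ => by rw [hp]; ring
    rw [hfac]
    have h1 := clWeight_pos hβl hwbar hn hwm u
    calc (249/250) * ((1 + 2 * (1/8:ℝ)) * (α * s))
        ≤ (249/250) * (clWeight wbar β wmax n u * s) := by nlinarith
      _ = clWeight wbar β wmax n u * s / ((n:ℝ) * wbar) * ((249/250) * ((n:ℝ) * wbar)) := by
          field_simp
      _ ≤ _ := by apply mul_le_mul_of_nonneg_left hsum; positivity
  have hsub : {ω | (((M.G j ω).neighborSet u).ncard : ℝ) ≤ (1 + (1/8:ℝ)) * α * s} ⊆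
      {ω | ∑ v ∈ S, (Dset M j u v).indicator 1 ω ≤ (1 + (1/8:ℝ)) * α * s} := by
    intro ω hω
    rw [Set.mem_setOf_eq, ← deg_eq_sum M j u ω]
    exact hω
  refine le_trans (measure_mono hsub) ?_
  refine le_trans (chernoff_lower_tail S (Dset M j u) (Dset_meas M j u) p hp0 hp1 hind t
    ht0 ((1 + (1/8:ℝ)) * α * s)) (ENNReal.ofReal_le_ofReal ?_)
  apply Real.exp_le_exp.mpr
  rw [het]
  have hαs : 0 ≤ α * s := by positivity
  nlinarith [hm, ht, mul_le_mul_of_nonneg_right ht hαs]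

end prob2


section main

lemma alphaZ_pos {γ : ℝ} {n : ℕ} (hn : 2 ≤ n) (k : ℤ) : 0 < alphaZ γ n k := by
  have hN : (0:ℝ) < n := Nat.cast_pos.mpr (by omega)
  exact div_pos (Real.rpow_pos_of_pos hN _) (zpow_pos (by norm_num) _)

lemma main_det (wbar β s γ ε : ℝ) (hβl : 2 < β) (hβu : β < 3) (hwbar : 0 < wbar)
    (hs0 : 0 < s) (hs1 : s ≤ 1) (hε : 0 < ε)
    (wmax : ℕ → ℝ) (n : ℕ) (hn : 2 ≤ n) (hwm : wbar ≤ wmax n)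
    (hwmsq : wmax n ≤ Real.sqrt ((n:ℝ) * wbar))
    (Ωn : Type) [MeasurableSpace Ωn] (M : ChungLuPair wbar β s wmax n Ωn)
    (hsum_up : ∑ v : Fin n, clWeight wbar β wmax n v ≤ (251/250) * ((n:ℝ) * wbar))
    (hsum_low : (249/250) * ((n:ℝ) * wbar) + wmax n ≤ ∑ v : Fin n, clWeight wbar β wmax n v)
    (hαs : 14000 * Real.log n ≤ alphaZ γ n (kstar wbar β s γ n - 1) * s) :
    1 - (n : ℝ) ^ (ε - 4) ≤
      (M.μ {ω | ∀ j : Fin 2,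
        {u : Fin n | clWeight wbar β wmax n u ≤ alphaZ γ n (kstar wbar β s γ n - 1)} ⊆
          {u : Fin n | (((M.G j ω).neighborSet u).ncard : ℝ) ≤
            (1 + (1/8 : ℝ)) * alphaZ γ n (kstar wbar β s γ n - 1) * s} ∧
        {u : Fin n | (((M.G j ω).neighborSet u).ncard : ℝ) ≤
            (1 + (1/8 : ℝ)) * alphaZ γ n (kstar wbar β s γ n - 1) * s} ⊆
          {u : Fin n | clWeight wbar β wmax n u ≤
            (1 + 2 * (1/8 : ℝ)) * alphaZ γ n (kstar wbar β s γ n - 1)}}).toReal := by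
  classical
  haveI := M.prob
  have hN : (0:ℝ) < n := Nat.cast_pos.mpr (by omega)
  set α := alphaZ γ n (kstar wbar β s γ n - 1) with hαdef
  have hα : 0 < α := alphaZ_pos hn _
  set E : Set Ωn := {ω | ∀ j : Fin 2,
        {u : Fin n | clWeight wbar β wmax n u ≤ α} ⊆
          {u : Fin n | (((M.G j ω).neighborSet u).ncard : ℝ) ≤ (1 + (1/8 : ℝ)) * α * s} ∧
        {u : Fin n | (((M.G j ω).neighborSet u).ncard : ℝ) ≤ (1 + (1/8 : ℝ)) * α * s} ⊆
          {u : Fin n | clWeight wbar β wmax n u ≤ (1 + 2 * (1/8 : ℝ)) * α}} with hE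
  set Bad1 : Fin 2 → Fin n → Set Ωn := fun j u =>
    {ω | clWeight wbar β wmax n u ≤ α ∧
      (1 + (1/8:ℝ)) * α * s < (((M.G j ω).neighborSet u).ncard : ℝ)} with hBad1
  set Bad2 : Fin 2 → Fin n → Set Ωn := fun j u =>
    {ω | (((M.G j ω).neighborSet u).ncard : ℝ) ≤ (1 + (1/8:ℝ)) * α * s ∧
      (1 + 2 * (1/8:ℝ)) * α < clWeight wbar β wmax n u} with hBad2
  -- the per-u erase sums
  have hw_pos : ∀ v : Fin n, 0 < clWeight wbar β wmax n v := clWeight_pos hβl hwbar hn hwm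
  have hsum_up' : ∀ u : Fin n, ∑ v ∈ Finset.univ.erase u, clWeight wbar β wmax n v ≤
      (251/250) * ((n:ℝ) * wbar) := by
    intro u
    refine le_trans ?_ hsum_up
    rw [Finset.sum_erase_eq_sub (Finset.mem_univ u)]
    linarith [hw_pos u]
  have hsum_low' : ∀ u : Fin n, (249/250) * ((n:ℝ) * wbar) ≤
      ∑ v ∈ Finset.univ.erase u, clWeight wbar β wmax n v := by
    intro u
    rw [Finset.sum_erase_eq_sub (Finset.mem_univ u)]
    have := clWeight_le_wmax hβl hwbar hn hwm u
    linarith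
  -- per-vertex bound
  have hexp : ENNReal.ofReal (Real.exp (-(α * s) / 2000)) ≤
      ENNReal.ofReal ((n:ℝ) ^ (-7:ℝ)) := by
    apply ENNReal.ofReal_le_ofReal
    rw [Real.rpow_def_of_pos hN]
    apply Real.exp_le_exp.mpr
    nlinarith
  have hb1 : ∀ j u, M.μ (Bad1 j u) ≤ ENNReal.ofReal ((n:ℝ) ^ (-7:ℝ)) := by
    intro j u
    by_cases hP : clWeight wbar β wmax n u ≤ α
    · refine le_trans (le_trans (measure_mono ?_) (bad_upper M j u hβl hwbar hn hwm hwmsq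
        hs0 hs1 (hsum_up' u) hα.le hP)) hexp
      intro ω hω; exact hω.2
    · have : Bad1 j u = ∅ := by
        ext ω; simp only [hBad1, Set.mem_setOf_eq, Set.mem_empty_iff_false, iff_false]
        exact fun h => hP h.1
      rw [this, measure_empty]; simp
  have hb2 : ∀ j u, M.μ (Bad2 j u) ≤ ENNReal.ofReal ((n:ℝ) ^ (-7:ℝ)) := by
    intro j u
    by_cases hP : (1 + 2 * (1/8:ℝ)) * α < clWeight wbar β wmax n u
    · refine le_trans (le_trans (measure_mono ?_) (bad_lower M j u hβl hwbar hn hwm hwmsq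
        hs0 hs1 (hsum_low' u) hα.le hP)) hexp
      intro ω hω; exact hω.1
    · have : Bad2 j u = ∅ := by
        ext ω; simp only [hBad2, Set.mem_setOf_eq, Set.mem_empty_iff_false, iff_false]
        exact fun h => hP h.2
      rw [this, measure_empty]; simp
  -- complement inclusion
  have hcomp : Eᶜ ⊆ ⋃ j : Fin 2, ⋃ u : Fin n, (Bad1 j u ∪ Bad2 j u) := by
    intro ω hω
    rw [Set.mem_compl_iff, hE, Set.mem_setOf_eq] at hω
    rw [not_forall] at hω
    obtain ⟨j, hj⟩ := hω
    rw [not_and_or] at hj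
    rcases hj with hj | hj
    · rw [Set.not_subset] at hj
      obtain ⟨u, hu1, hu2⟩ := hj
      rw [Set.mem_setOf_eq] at hu1
      rw [Set.mem_setOf_eq, not_le] at hu2
      exact Set.mem_iUnion.mpr ⟨j, Set.mem_iUnion.mpr ⟨u, Or.inl ⟨hu1, hu2⟩⟩⟩
    · rw [Set.not_subset] at hj
      obtain ⟨u, hu1, hu2⟩ := hj
      rw [Set.mem_setOf_eq] at hu1
      rw [Set.mem_setOf_eq, not_le] at hu2
      exact Set.mem_iUnion.mpr ⟨j, Set.mem_iUnion.mpr ⟨u, Or.inr ⟨hu1, hu2⟩⟩⟩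
  -- measure of complement
  have hEc : M.μ Eᶜ ≤ ENNReal.ofReal ((n:ℝ) ^ (ε - 4)) := by
    have step1 : M.μ Eᶜ ≤ ∑ j : Fin 2, ∑ u : Fin n, (ENNReal.ofReal ((n:ℝ) ^ (-7:ℝ)) +
        ENNReal.ofReal ((n:ℝ) ^ (-7:ℝ))) := by
      refine le_trans (measure_mono hcomp) ?_
      refine le_trans (measure_iUnion_fintype_le _ _) (Finset.sum_le_sum fun j _ => ?_)
      refine le_trans (measure_iUnion_fintype_le _ _) (Finset.sum_le_sum fun u _ => ?_)
      exact le_trans (measure_union_le _ _) (add_le_add (hb1 j u) (hb2 j u))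
    refine le_trans step1 ?_
    rw [Finset.sum_const, Finset.sum_const, Finset.card_univ, Finset.card_univ,
      Fintype.card_fin, Fintype.card_fin, smul_smul]
    rw [← ENNReal.ofReal_add (by positivity) (by positivity), nsmul_eq_mul]
    rw [show ((2*n : ℕ) : ENNReal) = ENNReal.ofReal ((2*n : ℕ) : ℝ) from
      (ENNReal.ofReal_natCast _).symm]
    rw [← ENNReal.ofReal_mul (by positivity)]
    apply ENNReal.ofReal_le_ofReal
    push_cast
    have e2 : (n:ℝ)^(1:ℝ) * (n:ℝ)^(-7:ℝ) = (n:ℝ)^(-6:ℝ) := by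
      rw [← Real.rpow_add hN]; norm_num
    have e1 : 2 * (n:ℝ) * ((n:ℝ)^(-7:ℝ) + (n:ℝ)^(-7:ℝ)) = 4 * (n:ℝ)^(-6:ℝ) := by
      rw [← e2, Real.rpow_one]; ring
    rw [e1]
    have e4 : (4:ℝ) * (n:ℝ)^(-6:ℝ) ≤ (n:ℝ)^(-4:ℝ) := by
      have : (n:ℝ)^(-4:ℝ) = (n:ℝ)^(2:ℝ) * (n:ℝ)^(-6:ℝ) := by
        rw [← Real.rpow_add hN]; norm_num
      rw [this]
      have h2 : (4:ℝ) ≤ (n:ℝ)^(2:ℝ) := by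
        rw [show ((2:ℝ)) = ((2:ℕ):ℝ) from by norm_num, Real.rpow_natCast]
        have : (2:ℝ) ≤ (n:ℝ) := by exact_mod_cast hn
        nlinarith
      have := Real.rpow_pos_of_pos hN (-6:ℝ)
      nlinarith
    refine e4.trans (Real.rpow_le_rpow_of_exponent_le (by exact_mod_cast hn.trans' (by norm_num)) (by linarith))
  -- conclude
  have huniv : (1 : ENNReal) ≤ M.μ E + ENNReal.ofReal ((n:ℝ) ^ (ε - 4)) := by
    calc (1:ENNReal) = M.μ Set.univ := (measure_univ).symm
      _ ≤ M.μ (E ∪ Eᶜ) := by rw [Set.union_compl_self]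
      _ ≤ M.μ E + M.μ Eᶜ := measure_union_le _ _
      _ ≤ M.μ E + ENNReal.ofReal ((n:ℝ) ^ (ε - 4)) := by gcongr
  have hfin : M.μ E ≠ ⊤ := measure_ne_top _ _
  rcases le_or_gt ((n:ℝ) ^ (ε - 4)) 1 with hle | hgt
  · have h1 : ENNReal.ofReal (1 - (n:ℝ) ^ (ε - 4)) ≤ M.μ E := by
      rw [ENNReal.ofReal_sub _ (by positivity), ENNReal.ofReal_one]
      exact tsub_le_iff_right.mpr huniv
    have := (ENNReal.ofReal_le_iff_le_toReal hfin).mp h1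
    linarith [this]
  · have h0 : (0:ℝ) ≤ (M.μ E).toReal := ENNReal.toReal_nonneg
    linarith
end main


section asymp

lemma Cconst_pos {wbar β : ℝ} (hβl : 2 < β) (hβu : β < 3) (hwbar : 0 < wbar) :
    0 < Cconst wbar β := by
  have h1 : (1:ℝ) < 2 ^ (β - 1) :=
    (Real.one_lt_rpow_iff_of_pos (by norm_num)).mpr (Or.inl ⟨by norm_num, by linarith⟩)
  have h2 : (0:ℝ) < ((β - 2) * wbar / (β - 1)) ^ (β - 1) :=
    Real.rpow_pos_of_pos (by apply div_pos (by nlinarith) (by linarith)) _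
  rw [Cconst]
  nlinarith

lemma alpha_kstar_lower (wbar β s γ : ℝ) (hβl : 2 < β) (hβu : β < 3) (hwbar : 0 < wbar)
    (hs0 : 0 < s) (n : ℕ) (hn : 2 ≤ n) :
    2 * ((192 * wbar * Real.log n / (Cconst wbar β * s ^ 2)) ^ (1/(3-β))) ≤
      alphaZ γ n (kstar wbar β s γ n - 1) := by
  have hN : (0:ℝ) < n := Nat.cast_pos.mpr (by omega)
  have hC := Cconst_pos hβl hβu hwbar
  have hL : 0 < Real.log n := Real.log_pos (by exact_mod_cast hn.trans_lt' (by norm_num))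
  set q : ℝ := Cconst wbar β * s ^ 2 / (192 * wbar * Real.log n) with hqdef
  have hq : 0 < q := by positivity
  set X : ℝ := q ^ (1/(3-β)) with hXdef
  have hX : 0 < X := Real.rpow_pos_of_pos hq _
  have hnγ : (0:ℝ) < (n:ℝ) ^ γ := Real.rpow_pos_of_pos hN _
  have h2k : (2:ℝ) ^ (kstar wbar β s γ n) ≤ (n:ℝ) ^ γ * X := by
    have h1 : ((kstar wbar β s γ n : ℤ) : ℝ) ≤ Real.logb 2 ((n:ℝ) ^ γ * X) := by
      rw [kstar]
      exact_mod_cast Int.floor_le _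
    calc (2:ℝ) ^ (kstar wbar β s γ n) = (2:ℝ) ^ ((kstar wbar β s γ n : ℤ) : ℝ) :=
          (Real.rpow_intCast 2 _).symm
      _ ≤ (2:ℝ) ^ (Real.logb 2 ((n:ℝ) ^ γ * X)) :=
          Real.rpow_le_rpow_of_exponent_le one_le_two h1
      _ = (n:ℝ) ^ γ * X := Real.rpow_logb (by norm_num) (by norm_num) (by positivity)
  have h2kpos : (0:ℝ) < (2:ℝ) ^ (kstar wbar β s γ n) := zpow_pos (by norm_num) _
  have halpha : alphaZ γ n (kstar wbar β s γ n - 1) =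
      2 * ((n:ℝ) ^ γ / (2:ℝ) ^ (kstar wbar β s γ n)) := by
    rw [alphaZ, zpow_sub_one₀ (two_ne_zero), div_mul_eq_div_div_swap]
    ring
  have hstep : (n:ℝ) ^ γ / ((n:ℝ) ^ γ * X) ≤ (n:ℝ) ^ γ / (2:ℝ) ^ (kstar wbar β s γ n) :=
    div_le_div_of_nonneg_left hnγ.le h2kpos h2k
  have heq : (n:ℝ) ^ γ / ((n:ℝ) ^ γ * X) = (192 * wbar * Real.log n /
      (Cconst wbar β * s ^ 2)) ^ (1/(3-β)) := by
    rw [show (n:ℝ) ^ γ / ((n:ℝ) ^ γ * X) = X⁻¹ from by field_simp]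
    rw [hXdef, ← Real.inv_rpow hq.le, hqdef, inv_div]
  rw [halpha]
  rw [heq] at hstep
  linarith
end asymp


section ev
set_option maxHeartbeats 1000000

lemma eventually_main (wbar β s γ : ℝ) (hβl : 2 < β) (hβu : β < 3) (hwbar : 0 < wbar)
    (hs0 : 0 < s) (hs1 : s ≤ 1) (hγ0 : 0 < γ) (wmax : ℕ → ℝ)
    (hwmax : ∀ n : ℕ, 2 ≤ n →
      wbar ≤ wmax n ∧ wmax n ≤ Real.sqrt (n * wbar) ∧ (n : ℝ) ^ γ ≤ wmax n) :
    ∀ᶠ n : ℕ in Filter.atTop,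
      (∑ v : Fin n, clWeight wbar β wmax n v ≤ (251/250) * ((n:ℝ) * wbar)) ∧
      ((249/250) * ((n:ℝ) * wbar) + wmax n ≤ ∑ v : Fin n, clWeight wbar β wmax n v) ∧
      (14000 * Real.log n ≤ alphaZ γ n (kstar wbar β s γ n - 1) * s) := by
  obtain ⟨hb0, hb1, -⟩ := bfacts hβl hβu
  set b := (β-2)/(β-1) with hbdef
  have hβ1 : (0:ℝ) < β - 1 := by linarith
  have hC := Cconst_pos hβl hβu hwbar
  set K : ℝ := (β-2) * wbar / (β-1) with hKdef
  have hK : 0 < K := by apply div_pos (by nlinarith) (by linarith)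
  set T1 : ℝ := (1/500 : ℝ) ^ (b⁻¹) with hT1def
  have hT1 : 0 < T1 := Real.rpow_pos_of_pos (by norm_num) _
  set E0 : ℝ := min ((1/500 : ℝ) ^ ((β-1)⁻¹)) ((T1/2) ^ ((β-1)⁻¹)) with hE0def
  have hE0 : 0 < E0 :=
    lt_min (Real.rpow_pos_of_pos (by norm_num) _) (Real.rpow_pos_of_pos (by positivity) _)
  set r : ℝ := 1/(3-β) with hrdef
  have hr1 : 1 < r := by
    rw [hrdef, lt_div_iff₀ (by linarith)]; linarith
  set K1 : ℝ := 192 * wbar / (Cconst wbar β * s ^ 2) with hK1def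
  have hK1 : 0 < K1 := by positivity
  set c0 : ℝ := 7000 / (s * K1 ^ r) with hc0def
  have hK1r : (0:ℝ) < K1 ^ r := Real.rpow_pos_of_pos hK1 _
  have hc0 : 0 < c0 := by positivity
  -- eventual facts
  have F1 : ∀ᶠ n : ℕ in Filter.atTop, 2 ≤ n := Filter.eventually_ge_atTop 2
  have F2 : ∀ᶠ n : ℕ in Filter.atTop, K / E0 ≤ (n:ℝ) ^ γ :=
    ((tendsto_rpow_atTop hγ0).comp tendsto_natCast_atTop_atTop).eventually_ge_atTop _
  have F4 : ∀ᶠ n : ℕ in Filter.atTop, 2 / T1 ≤ (n:ℝ) :=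
    tendsto_natCast_atTop_atTop.eventually_ge_atTop _
  have F5 : ∀ᶠ n : ℕ in Filter.atTop, 250000 / wbar ≤ (n:ℝ) :=
    tendsto_natCast_atTop_atTop.eventually_ge_atTop _
  have F6 : ∀ᶠ n : ℕ in Filter.atTop, c0 ≤ Real.log n ^ (r - 1) :=
    ((tendsto_rpow_atTop (by linarith)).comp
      (Real.tendsto_log_atTop.comp tendsto_natCast_atTop_atTop)).eventually_ge_atTop _
  filter_upwards [F1, F2, F4, F5, F6] with n h1 h2 h4 h5 h6
  obtain ⟨hwm, hwmsq, hwmγ⟩ := hwmax n h1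
  have hN : (0:ℝ) < n := Nat.cast_pos.mpr (by omega)
  have hnγ : (0:ℝ) < (n:ℝ) ^ γ := Real.rpow_pos_of_pos hN _
  have hwmpos : 0 < wmax n := lt_of_lt_of_le hwbar hwm
  set t : ℝ := (β - 2) * wbar / ((β - 1) * wmax n) with htdef
  have ht : 0 < t := tpos hβl hwbar hwm
  have hi0 := iZero_pos hβl hwbar h1 hwm
  -- t ≤ K / n^γ ≤ E0
  have htK : t ≤ E0 := by
    have step : t ≤ K / (n:ℝ) ^ γ := by
      rw [htdef, hKdef, div_div]
      exact div_le_div_of_nonneg_left (by nlinarith) (by positivity) (by nlinarith)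
    refine step.trans ?_
    rw [div_le_iff₀ hnγ]
    have hh := mul_le_mul_of_nonneg_right h2 hE0.le
    rw [div_mul_cancel₀ K hE0.ne'] at hh
    linarith
  -- i0 / n bounds
  have hi0_eq : iZero wbar β wmax n = (n:ℝ) * t ^ (β - 1) := by rw [iZero, htdef]
  have hi0_small : ∀ ε : ℝ, 0 < ε → t ≤ ε ^ ((β-1)⁻¹) → iZero wbar β wmax n ≤ ε * n := by
    intro ε hε hbound
    rw [hi0_eq]
    have : t ^ (β-1) ≤ (ε ^ ((β-1)⁻¹)) ^ (β-1) := Real.rpow_le_rpow ht.le hbound (by linarith)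
    rw [Real.rpow_inv_rpow hε.le (by linarith)] at this
    nlinarith
  have hi0_500 : iZero wbar β wmax n ≤ (1/500) * n :=
    hi0_small _ (by norm_num) (htK.trans (min_le_left _ _))
  have hi0_T1 : iZero wbar β wmax n ≤ (T1/2) * n :=
    hi0_small _ (by positivity) (htK.trans (min_le_right _ _))
  refine ⟨?_, ?_, ?_⟩
  · -- upper sum
    refine (sum_clWeight_upper hβl hβu hwbar h1 hwm).trans ?_
    nlinarith
  · -- lower sum
    have hq : ((1 + iZero wbar β wmax n)/(n:ℝ)) ^ b ≤ 1/500 := by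
      have harg : (1 + iZero wbar β wmax n)/(n:ℝ) ≤ T1 := by
        rw [div_le_iff₀ hN]
        have hone : (1:ℝ) ≤ (T1/2) * n := by
          rw [div_le_iff₀ hT1] at h4
          nlinarith
        nlinarith
      calc ((1 + iZero wbar β wmax n)/(n:ℝ)) ^ b ≤ T1 ^ b :=
            Real.rpow_le_rpow (by positivity) harg hb0.le
        _ = 1/500 := Real.rpow_inv_rpow (by norm_num) hb0.ne'
    have hwmn : wmax n ≤ (wbar/500) * n := by
      refine hwmsq.trans ?_
      have h0 : (0:ℝ) ≤ (wbar/500) * n := by positivity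
      have : (n:ℝ) * wbar ≤ ((wbar/500) * n) ^ 2 := by
        rw [div_le_iff₀ hwbar] at h5
        nlinarith
      calc Real.sqrt ((n:ℝ) * wbar) ≤ Real.sqrt (((wbar/500) * n)^2) := Real.sqrt_le_sqrt this
        _ = (wbar/500) * n := Real.sqrt_sq h0
    refine le_trans ?_ (sum_clWeight_lower hβl hβu hwbar h1 hwm)
    have expand : wbar * (n:ℝ) * (1 - ((1 + iZero wbar β wmax n)/(n:ℝ)) ^ b) ≥
        wbar * (n:ℝ) * (1 - 1/500) := by nlinarith
    nlinarith
  · -- alpha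
    have halpha := alpha_kstar_lower wbar β s γ hβl hβu hwbar hs0 n h1
    have hL : 0 < Real.log n := Real.log_pos (by exact_mod_cast h1.trans_lt' (by norm_num))
    have hsplit : (192 * wbar * Real.log n / (Cconst wbar β * s ^ 2)) ^ r
        = K1 ^ r * (Real.log n ^ (r-1) * Real.log n) := by
      rw [show 192 * wbar * Real.log n / (Cconst wbar β * s ^ 2) = K1 * Real.log n from by
        rw [hK1def]; ring]
      rw [Real.mul_rpow hK1.le hL.le]
      congr 1
      have hx : Real.log (n:ℝ) ^ (r-1) * Real.log (n:ℝ)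
          = Real.log (n:ℝ) ^ (r-1) * Real.log (n:ℝ) ^ (1:ℝ) := by rw [Real.rpow_one]
      rw [hx, ← Real.rpow_add hL]
      norm_num
    rw [hrdef] at hsplit
    rw [hsplit] at halpha
    have hmono : c0 * Real.log n ≤ Real.log n ^ (r-1) * Real.log n :=
      mul_le_mul_of_nonneg_right h6 hL.le
    have hmul := mul_le_mul_of_nonneg_right halpha hs0.le
    have ha := mul_le_mul_of_nonneg_left hmono hK1r.le
    have hb := mul_le_mul_of_nonneg_right ha hs0.le
    have hkey : 2 * (K1 ^ r * (c0 * Real.log n)) * s = 14000 * Real.log n := by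
      rw [hc0def]
      field_simp
      ring
    linarith [hmul, hb, hkey]
end ev


theorem statement_5
    (wbar β s γ : ℝ) (hwbar : 0 < wbar) (hβl : 2 < β) (hβu : β < 3)
    (hs0 : 0 < s) (hs1 : s ≤ 1) (hγ0 : 0 < γ) (hγh : γ < 1/2)
    (wmax : ℕ → ℝ)
    (hwmax : ∀ n : ℕ, 2 ≤ n →
      wbar ≤ wmax n ∧ wmax n ≤ Real.sqrt (n * wbar) ∧ (n : ℝ) ^ γ ≤ wmax n)
    (Ω : ℕ → Type) [∀ n, MeasurableSpace (Ω n)]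
    (M : ∀ n : ℕ, 2 ≤ n → ChungLuPair wbar β s wmax n (Ω n))
    (ε : ℝ) (hε : 0 < ε) :
    ∃ N : ℕ, ∀ (n : ℕ) (hn : 2 ≤ n), N ≤ n →
      1 - (n : ℝ) ^ (ε - 4) ≤
        ((M n hn).μ {ω | ∀ j : Fin 2,
          {u : Fin n | clWeight wbar β wmax n u ≤ alphaZ γ n (kstar wbar β s γ n - 1)} ⊆
            {u : Fin n | ((((M n hn).G j ω).neighborSet u).ncard : ℝ) ≤
              (1 + (1/8 : ℝ)) * alphaZ γ n (kstar wbar β s γ n - 1) * s} ∧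
          {u : Fin n | ((((M n hn).G j ω).neighborSet u).ncard : ℝ) ≤
              (1 + (1/8 : ℝ)) * alphaZ γ n (kstar wbar β s γ n - 1) * s} ⊆
            {u : Fin n | clWeight wbar β wmax n u ≤
              (1 + 2 * (1/8 : ℝ)) * alphaZ γ n (kstar wbar β s γ n - 1)}}).toReal := by
  have hev := eventually_main wbar β s γ hβl hβu hwbar hs0 hs1 hγ0 wmax hwmax
  obtain ⟨N0, hN0⟩ := Filter.eventually_atTop.mp hev
  refine ⟨N0, fun n hn hNn => ?_⟩
  obtain ⟨h1, h2, h3⟩ := hN0 n hNn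
  obtain ⟨hwm, hwmsq, -⟩ := hwmax n hn
  exact main_det wbar β s γ ε hβl hβu hwbar hs0 hs1 hε wmax n hn hwm hwmsq (Ω n) (M n hn) h1 h2 h3
end
end

section
/- There exists N such that for all n ≥ N and any two distinct vertices u, v with w_u ≤ (1+2δ)·α_{k*} and w_v ≤ (1+2δ)·α_{k*}: P( |Γ₁^{G₁}(u) ∩ Γ₁^{G₂}(v) ∩ P̄_{≥k*}| ≤ 2 ) ≥ 1 − n^{−2}, where P̄_{≥k*} = { i : w_i ≤ (1+2δ)·α_{k*−1} }. -/
open MeasureTheory ProbabilityTheory Filter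

noncomputable section

/-! ### Auxiliary lemmas -/

lemma aux_Cconst_pos {wbar β : ℝ} (hwbar : 0 < wbar) (hβl : 2 < β) :
    0 < Cconst wbar β := by
  have h1 : (1:ℝ) < 2 ^ (β - 1) :=
    (Real.one_lt_rpow_iff_of_pos (by norm_num)).mpr (Or.inl ⟨by norm_num, by linarith⟩)
  have h2 : 0 < ((β - 2) * wbar / (β - 1)) ^ (β - 1) :=
    Real.rpow_pos_of_pos (div_pos (mul_pos (by linarith) hwbar) (by linarith)) _
  exact mul_pos (by linarith) h2

lemma aux_clWeight_pos {wbar β : ℝ} {wmax : ℕ → ℝ} (hwbar : 0 < wbar) (hβl : 2 < β)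
    {n : ℕ} (hn : 0 < n) (hwm : 0 < wmax n) (i : Fin n) :
    0 < clWeight wbar β wmax n i := by
  have hnR : (0:ℝ) < n := by exact_mod_cast hn
  have hz : 0 < (β - 2) * wbar / ((β - 1) * wmax n) :=
    div_pos (mul_pos (by linarith) hwbar) (mul_pos (by linarith) hwm)
  have hr : 0 < ((β - 2) * wbar / ((β - 1) * wmax n)) ^ (β - 1) := Real.rpow_pos_of_pos hz _
  have hi : (0:ℝ) ≤ ((i : ℕ) : ℝ) := Nat.cast_nonneg _
  have hden : 0 < ((i : ℕ) : ℝ) + 1 +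
      (n:ℝ) * (((β - 2) * wbar / ((β - 1) * wmax n)) ^ (β - 1)) := by nlinarith
  exact mul_pos (mul_pos hwbar (div_pos (by linarith) (by linarith)))
    (Real.rpow_pos_of_pos (div_pos hnR hden) _)

lemma aux_alphaZ_pos {γ : ℝ} {n : ℕ} (hn : 0 < n) (k : ℤ) : 0 < alphaZ γ n k := by
  have hnR : (0:ℝ) < n := by exact_mod_cast hn
  exact div_pos (Real.rpow_pos_of_pos hnR _) (zpow_pos (by norm_num) _)

lemma aux_alphaZ_kstar_le {wbar β s γ : ℝ} (hwbar : 0 < wbar) (hβl : 2 < β) (hβu : β < 3)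
    (hs0 : 0 < s) {n : ℕ} (hn : 3 ≤ n) :
    alphaZ γ n (kstar wbar β s γ n) ≤
      2 * (192 * wbar * Real.log n / (Cconst wbar β * s ^ 2)) ^ ((1:ℝ) / (3 - β)) := by
  have hn3R : (3:ℝ) ≤ (n:ℝ) := by exact_mod_cast hn
  have hn0 : (0:ℝ) < n := by linarith
  have hL : 0 < Real.log n := Real.log_pos (by linarith)
  have hC := aux_Cconst_pos hwbar hβl
  set b : ℝ := Cconst wbar β * s ^ 2 / (192 * wbar * Real.log n) with hb_def
  have hb : 0 < b := div_pos (mul_pos hC (by positivity)) (by positivity)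
  have hbe : 0 < b ^ ((1:ℝ) / (3 - β)) := Real.rpow_pos_of_pos hb _
  have hγn : 0 < (n:ℝ) ^ γ := Real.rpow_pos_of_pos hn0 _
  set x : ℝ := (n:ℝ) ^ γ * b ^ ((1:ℝ) / (3 - β)) with hx_def
  have hx : 0 < x := mul_pos hγn hbe
  have hkst : kstar wbar β s γ n = ⌊Real.logb 2 x⌋ := by
    unfold kstar
    rw [hx_def, hb_def]
  have h2k : x / 2 ≤ (2:ℝ) ^ (kstar wbar β s γ n) := by
    rw [hkst]
    have h1 : Real.logb 2 x - 1 ≤ ((⌊Real.logb 2 x⌋ : ℤ) : ℝ) := by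
      linarith [Int.sub_one_lt_floor (Real.logb 2 x)]
    calc x / 2 = (2:ℝ) ^ (Real.logb 2 x - 1) := by
          rw [Real.rpow_sub (by norm_num), Real.rpow_one,
            Real.rpow_logb (by norm_num) (by norm_num) hx]
      _ ≤ (2:ℝ) ^ (((⌊Real.logb 2 x⌋ : ℤ) : ℝ)) :=
          (Real.rpow_le_rpow_left_iff (by norm_num)).mpr h1
      _ = (2:ℝ) ^ (⌊Real.logb 2 x⌋ : ℤ) := by rw [Real.rpow_intCast]
  have h2kpos : (0:ℝ) < (2:ℝ) ^ (kstar wbar β s γ n) := zpow_pos (by norm_num) _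
  have step1 : alphaZ γ n (kstar wbar β s γ n) ≤ (n:ℝ) ^ γ / (x / 2) := by
    unfold alphaZ
    rw [div_le_div_iff₀ h2kpos (by linarith : (0:ℝ) < x / 2)]
    exact mul_le_mul_of_nonneg_left h2k hγn.le
  have step2 : (n:ℝ) ^ γ / (x / 2) = 2 * (b ^ ((1:ℝ) / (3 - β)))⁻¹ := by
    rw [hx_def]
    field_simp
  have step3 : (b ^ ((1:ℝ) / (3 - β)))⁻¹ =
      (192 * wbar * Real.log n / (Cconst wbar β * s ^ 2)) ^ ((1:ℝ) / (3 - β)) := by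
    rw [← Real.inv_rpow hb.le, hb_def, inv_div]
  calc alphaZ γ n (kstar wbar β s γ n) ≤ (n:ℝ) ^ γ / (x / 2) := step1
    _ = 2 * (192 * wbar * Real.log n / (Cconst wbar β * s ^ 2)) ^ ((1:ℝ) / (3 - β)) := by
        rw [step2, step3]

lemma aux_eventually {K r : ℝ} (hK : 0 < K) (hr : 0 < r) :
    ∀ᶠ m : ℕ in atTop, K * Real.log m ^ r ≤ m := by
  have h := (isLittleO_log_rpow_rpow_atTop r (one_pos)).def (show (0:ℝ) < K⁻¹ by positivity)
  have h2 : ∀ᶠ x : ℝ in atTop, K * Real.log x ^ r ≤ x := by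
    filter_upwards [h, eventually_ge_atTop (1:ℝ)] with x hx h1x
    have hlog : 0 ≤ Real.log x := Real.log_nonneg h1x
    have hx0 : (0:ℝ) < x := by linarith
    rw [Real.norm_eq_abs, Real.norm_eq_abs, Real.rpow_one,
      abs_of_nonneg (Real.rpow_nonneg hlog _), abs_of_nonneg hx0.le] at hx
    calc K * Real.log x ^ r ≤ K * (K⁻¹ * x) := mul_le_mul_of_nonneg_left hx hK.le
      _ = x := by field_simp
  exact tendsto_natCast_atTop_atTop.eventually h2

/-- The finset of the six relevant (pair, event-type) indices for a triple of vertices. -/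
def tripleFinset {n : ℕ} (u v : Fin n) (t : Fin n × Fin n × Fin n) :
    Finset (Sym2 (Fin n) × Option (Fin 2)) :=
  {(Sym2.mk u t.1, none), (Sym2.mk v t.1, none), (Sym2.mk u t.2.1, none),
    (Sym2.mk v t.2.1, none), (Sym2.mk u t.2.2, none), (Sym2.mk v t.2.2, none)}
set_option maxHeartbeats 2000000 in
theorem statement_14
    (wbar β s γ : ℝ) (hwbar : 0 < wbar) (hβl : 2 < β) (hβu : β < 3)
    (hs0 : 0 < s) (hs1 : s ≤ 1) (hγ0 : 0 < γ) (hγh : γ < 1/2)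
    (wmax : ℕ → ℝ)
    (hwmax : ∀ n : ℕ, 2 ≤ n →
      wbar ≤ wmax n ∧ wmax n ≤ Real.sqrt (n * wbar) ∧ (n : ℝ) ^ γ ≤ wmax n)
    (Ω : ℕ → Type) [∀ n, MeasurableSpace (Ω n)]
    (M : ∀ n : ℕ, 2 ≤ n → ChungLuPair wbar β s wmax n (Ω n))
 :
    ∃ N : ℕ, ∀ (n : ℕ) (hn : 2 ≤ n), N ≤ n →
      ∀ u v : Fin n, u ≠ v →
        clWeight wbar β wmax n u ≤ (1 + 2 * (1/8 : ℝ)) * alphaZ γ n (kstar wbar β s γ n) →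
        clWeight wbar β wmax n v ≤ (1 + 2 * (1/8 : ℝ)) * alphaZ γ n (kstar wbar β s γ n) →
      1 - ((n : ℝ) ^ 2)⁻¹ ≤
        ((M n hn).μ {ω |
          (((M n hn).G 0 ω).neighborSet u ∩ ((M n hn).G 1 ω).neighborSet v ∩
            {i : Fin n | clWeight wbar β wmax n i ≤
              (1 + 2 * (1/8 : ℝ)) * alphaZ γ n (kstar wbar β s γ n - 1)}).ncard ≤ 2}).toReal := by
  classical
  have hC := aux_Cconst_pos hwbar hβl
  set e : ℝ := (1:ℝ) / (3 - β) with he_def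
  have he : 0 < e := div_pos one_pos (by linarith)
  set c : ℝ := 192 * wbar / (Cconst wbar β * s ^ 2) with hc_def
  have hc : 0 < c := div_pos (by positivity) (mul_pos hC (by positivity))
  set K : ℝ := (25/8:ℝ) ^ 6 * 4096 * c ^ (e * 12) / wbar ^ 6 with hK_def
  have hK : 0 < K := div_pos
    (mul_pos (by norm_num) (Real.rpow_pos_of_pos hc _)) (by positivity)
  obtain ⟨N, hN⟩ := Filter.eventually_atTop.mp
    ((aux_eventually hK (by positivity : (0:ℝ) < e * 12)).and (Filter.eventually_ge_atTop 3))
  refine ⟨N, ?_⟩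
  intro n hn hNn u v huv hu hv
  obtain ⟨hKn, hn3⟩ := hN n hNn
  haveI := (M n hn).prob
  have hn0 : 0 < n := by omega
  have hnR : (0:ℝ) < n := by exact_mod_cast hn0
  have hn3R : (3:ℝ) ≤ n := by exact_mod_cast hn3
  have hL : 0 < Real.log n := Real.log_pos (by linarith)
  have hwm : 0 < wmax n := lt_of_lt_of_le hwbar (hwmax n hn).1
  have hWpos : ∀ i : Fin n, 0 < clWeight wbar β wmax n i := fun i =>
    aux_clWeight_pos hwbar hβl hn0 hwm i
  set kst : ℤ := kstar wbar β s γ n with hkst_def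
  set α : ℝ := alphaZ γ n kst with hα_def
  have hαpos : 0 < α := aux_alphaZ_pos hn0 kst
  set A : ℝ := 2 * (192 * wbar * Real.log n / (Cconst wbar β * s ^ 2)) ^ e with hA_def
  have hApos : 0 < A := by
    have : 0 < (192 * wbar * Real.log n / (Cconst wbar β * s ^ 2)) ^ e :=
      Real.rpow_pos_of_pos (div_pos (by positivity) (mul_pos hC (by positivity))) _
    rw [hA_def]; linarith
  have hαA : α ≤ A := aux_alphaZ_kstar_le hwbar hβl hβu hs0 hn3
  have hα2 : alphaZ γ n (kst - 1) = 2 * α := by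
    rw [hα_def]
    unfold alphaZ
    rw [show (2:ℝ) ^ (kst - 1) = 2 ^ kst / 2 by rw [zpow_sub₀ two_ne_zero, zpow_one],
      div_div_eq_mul_div]
    ring
  -- numeric bound: n^3 * q^6 ≤ n⁻²
  set q : ℝ := (5/4 * α) * (5/2 * α) / ((n:ℝ) * wbar) with hq_def
  have hq : 0 < q := div_pos (mul_pos (by linarith) (by linarith)) (mul_pos hnR hwbar)
  have hA12 : A ^ 12 = 4096 * (c ^ (e * 12) * Real.log n ^ (e * 12)) := by
    have hbase : 192 * wbar * Real.log n / (Cconst wbar β * s ^ 2) = c * Real.log n := by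
      rw [hc_def]; ring
    have hcL : (0:ℝ) ≤ c * Real.log n := by positivity
    rw [hA_def, hbase, mul_pow, ← Real.rpow_natCast ((c * Real.log n) ^ e) 12,
      ← Real.rpow_mul hcL, Real.mul_rpow hc.le hL.le]
    norm_num
  have hkey : (25/8:ℝ) ^ 6 * A ^ 12 ≤ (n:ℝ) * wbar ^ 6 := by
    have h1 : (25/8:ℝ) ^ 6 * A ^ 12 = (K * Real.log n ^ (e * 12)) * wbar ^ 6 := by
      rw [hA12, hK_def]
      field_simp
    rw [h1]
    have := mul_le_mul_of_nonneg_right hKn (by positivity : (0:ℝ) ≤ wbar ^ 6)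
    linarith
  have hQ : (n:ℝ) ^ 3 * ((5/4 * A) * (5/2 * A) / ((n:ℝ) * wbar)) ^ 6 ≤ (((n:ℝ)) ^ 2)⁻¹ := by
    have expand : (n:ℝ) ^ 3 * ((5/4 * A) * (5/2 * A) / ((n:ℝ) * wbar)) ^ 6 =
        ((25/8:ℝ) ^ 6 * A ^ 12) / ((n:ℝ) ^ 3 * wbar ^ 6) := by
      field_simp
      ring
    have hrhs : (((n:ℝ)) ^ 2)⁻¹ = ((n:ℝ) * wbar ^ 6) / ((n:ℝ) ^ 3 * wbar ^ 6) := by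
      field_simp
    rw [expand, hrhs]
    gcongr
  have hqQ : q ≤ 5/4 * A * (5/2 * A) / ((n:ℝ) * wbar) := by
    rw [hq_def]
    have h1 : 5/4 * α * (5/2 * α) ≤ 5/4 * A * (5/2 * A) := by nlinarith
    exact (div_le_div_iff_of_pos_right (mul_pos hnR hwbar)).mpr h1
  have hnum : (n:ℝ) ^ 3 * q ^ 6 ≤ (((n:ℝ)) ^ 2)⁻¹ := by
    refine le_trans ?_ hQ
    have h6 : q ^ 6 ≤ (5/4 * A * (5/2 * A) / ((n:ℝ) * wbar)) ^ 6 :=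
      pow_le_pow_left₀ hq.le hqQ 6
    exact mul_le_mul_of_nonneg_left h6 (by positivity)
  -- edge probability bound
  have hedge : ∀ x y : Fin n, x ≠ y → clWeight wbar β wmax n x ≤ 5/4 * α →
      clWeight wbar β wmax n y ≤ 5/2 * α →
      (M n hn).μ ((M n hn).A (Sym2.mk x y)) ≤ ENNReal.ofReal q := by
    intro x y hxy hx hy
    rw [(M n hn).hA x y hxy]
    apply ENNReal.ofReal_le_ofReal
    rw [hq_def]
    have h1 : clWeight wbar β wmax n x * clWeight wbar β wmax n y ≤ (5/4 * α) * (5/2 * α) :=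
      mul_le_mul hx hy (hWpos y).le (by linarith)
    exact (div_le_div_iff_of_pos_right (mul_pos hnR hwbar)).mpr h1
  have hu' : clWeight wbar β wmax n u ≤ 5/4 * α := by
    refine le_trans hu (le_of_eq ?_); norm_num
  have hv' : clWeight wbar β wmax n v ≤ 5/4 * α := by
    refine le_trans hv (le_of_eq ?_); norm_num
  -- the sets
  set T : Set (Fin n) := {i : Fin n | clWeight wbar β wmax n i ≤
    (1 + 2 * (1/8 : ℝ)) * alphaZ γ n (kst - 1)} with hT_def
  set Gd : Set (Ω n) := {ω | (((M n hn).G 0 ω).neighborSet u ∩ ((M n hn).G 1 ω).neighborSet v ∩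
    T).ncard ≤ 2} with hGd_def
  set Bad : Set (Ω n) := {ω | 2 < (((M n hn).G 0 ω).neighborSet u ∩
    ((M n hn).G 1 ω).neighborSet v ∩ T).ncard} with hBad_def
  set S : Finset (Fin n × Fin n × Fin n) := Finset.univ.filter (fun t =>
    (t.1 ≠ u ∧ t.1 ≠ v ∧ clWeight wbar β wmax n t.1 ≤ 5/2 * α) ∧
    (t.2.1 ≠ u ∧ t.2.1 ≠ v ∧ clWeight wbar β wmax n t.2.1 ≤ 5/2 * α) ∧
    (t.2.2 ≠ u ∧ t.2.2 ≠ v ∧ clWeight wbar β wmax n t.2.2 ≤ 5/2 * α) ∧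
    t.1 ≠ t.2.1 ∧ t.1 ≠ t.2.2 ∧ t.2.1 ≠ t.2.2) with hS_def
  set F : Fin n × Fin n × Fin n → Set (Ω n) := fun t =>
    ⋂ p ∈ tripleFinset u v t,
      (fun p : Sym2 (Fin n) × Option (Fin 2) =>
        p.2.elim ((M n hn).A p.1) (fun j => (M n hn).B j p.1)) p with hF_def
  -- containment of the bad event
  have hwt : ∀ a : Fin n, a ∈ T → clWeight wbar β wmax n a ≤ 5/2 * α := by
    intro a ha
    have h3 : clWeight wbar β wmax n a ≤ (1 + 2 * (1/8 : ℝ)) * alphaZ γ n (kst - 1) := ha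
    rw [hα2] at h3
    linarith
  have hBadSub : Bad ⊆ ⋃ t ∈ (S : Set (Fin n × Fin n × Fin n)), F t := by
    intro ω hω
    have hω' : 2 < (((M n hn).G 0 ω).neighborSet u ∩
        ((M n hn).G 1 ω).neighborSet v ∩ T).ncard := hω
    obtain ⟨a, ha, b, hb, c', hc', hab, hac, hbc⟩ :=
      (Set.two_lt_ncard (Set.toFinite _)).mp hω'
    obtain ⟨⟨ha1, ha2⟩, ha3⟩ := ha
    obtain ⟨⟨hb1, hb2⟩, hb3⟩ := hb
    obtain ⟨⟨hc1, hc2⟩, hc3⟩ := hc'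
    rw [SimpleGraph.mem_neighborSet] at ha1 ha2 hb1 hb2 hc1 hc2
    obtain ⟨hua, hAa, hBa⟩ := ((M n hn).hG 0 ω u a).mp ha1
    obtain ⟨hva, hAa', hBa'⟩ := ((M n hn).hG 1 ω v a).mp ha2
    obtain ⟨hub, hAb, hBb⟩ := ((M n hn).hG 0 ω u b).mp hb1
    obtain ⟨hvb, hAb', hBb'⟩ := ((M n hn).hG 1 ω v b).mp hb2
    obtain ⟨huc, hAc, hBc⟩ := ((M n hn).hG 0 ω u c').mp hc1
    obtain ⟨hvc, hAc', hBc'⟩ := ((M n hn).hG 1 ω v c').mp hc2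
    refine Set.mem_biUnion (show (a, b, c') ∈ (S : Set (Fin n × Fin n × Fin n)) from ?_) ?_
    · rw [Finset.mem_coe, hS_def, Finset.mem_filter]
      exact ⟨Finset.mem_univ _,
        ⟨Ne.symm hua, Ne.symm hva, hwt a ha3⟩,
        ⟨Ne.symm hub, Ne.symm hvb, hwt b hb3⟩,
        ⟨Ne.symm huc, Ne.symm hvc, hwt c' hc3⟩, hab, hac, hbc⟩
    · rw [hF_def]
      simp only [Set.mem_iInter]
      intro p hp
      simp only [tripleFinset, Finset.mem_insert, Finset.mem_singleton] at hp
      rcases hp with rfl | rfl | rfl | rfl | rfl | rfl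
      exacts [hAa, hAa', hAb, hAb', hAc, hAc']
  -- measure of each F t
  have hFt : ∀ t ∈ S, (M n hn).μ (F t) ≤ ENNReal.ofReal q ^ 6 := by
    rintro ⟨a, b, c'⟩ ht
    rw [hS_def, Finset.mem_filter] at ht
    obtain ⟨-, ⟨hau, hav, haw⟩, ⟨hbu, hbv, hbw⟩, ⟨hcu, hcv, hcw⟩, hab, hac, hbc⟩ := ht
    have hmeas : (M n hn).μ (F (a, b, c')) =
        ∏ p ∈ tripleFinset u v (a, b, c'),
          (M n hn).μ ((fun p : Sym2 (Fin n) × Option (Fin 2) =>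
            p.2.elim ((M n hn).A p.1) (fun j => (M n hn).B j p.1)) p) :=
      (M n hn).indep.meas_biInter (tripleFinset u v (a, b, c'))
    rw [hmeas]
    simp only [tripleFinset]
    rw [Finset.prod_insert (by
        simp [Sym2.eq_iff, huv, Ne.symm huv, hau, Ne.symm hau, hav, Ne.symm hav, hbu,
          Ne.symm hbu, hbv, Ne.symm hbv, hcu, Ne.symm hcu, hcv, Ne.symm hcv, hab,
          Ne.symm hab, hac, Ne.symm hac, hbc, Ne.symm hbc]),
      Finset.prod_insert (by
        simp [Sym2.eq_iff, huv, Ne.symm huv, hau, Ne.symm hau, hav, Ne.symm hav, hbu,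
          Ne.symm hbu, hbv, Ne.symm hbv, hcu, Ne.symm hcu, hcv, Ne.symm hcv, hab,
          Ne.symm hab, hac, Ne.symm hac, hbc, Ne.symm hbc]),
      Finset.prod_insert (by
        simp [Sym2.eq_iff, huv, Ne.symm huv, hau, Ne.symm hau, hav, Ne.symm hav, hbu,
          Ne.symm hbu, hbv, Ne.symm hbv, hcu, Ne.symm hcu, hcv, Ne.symm hcv, hab,
          Ne.symm hab, hac, Ne.symm hac, hbc, Ne.symm hbc]),
      Finset.prod_insert (by
        simp [Sym2.eq_iff, huv, Ne.symm huv, hau, Ne.symm hau, hav, Ne.symm hav, hbu,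
          Ne.symm hbu, hbv, Ne.symm hbv, hcu, Ne.symm hcu, hcv, Ne.symm hcv, hab,
          Ne.symm hab, hac, Ne.symm hac, hbc, Ne.symm hbc]),
      Finset.prod_insert (by
        simp [Sym2.eq_iff, huv, Ne.symm huv, hau, Ne.symm hau, hav, Ne.symm hav, hbu,
          Ne.symm hbu, hbv, Ne.symm hbv, hcu, Ne.symm hcu, hcv, Ne.symm hcv, hab,
          Ne.symm hab, hac, Ne.symm hac, hbc, Ne.symm hbc]),
      Finset.prod_singleton]
    have e1 := hedge u a (Ne.symm hau) hu' haw
    have e2 := hedge v a (Ne.symm hav) hv' haw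
    have e3 := hedge u b (Ne.symm hbu) hu' hbw
    have e4 := hedge v b (Ne.symm hbv) hv' hbw
    have e5 := hedge u c' (Ne.symm hcu) hu' hcw
    have e6 := hedge v c' (Ne.symm hcv) hv' hcw
    calc (M n hn).μ ((M n hn).A (Sym2.mk u a)) *
          ((M n hn).μ ((M n hn).A (Sym2.mk v a)) *
          ((M n hn).μ ((M n hn).A (Sym2.mk u b)) *
          ((M n hn).μ ((M n hn).A (Sym2.mk v b)) *
          ((M n hn).μ ((M n hn).A (Sym2.mk u c')) *
          (M n hn).μ ((M n hn).A (Sym2.mk v c'))))))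
        ≤ ENNReal.ofReal q * (ENNReal.ofReal q * (ENNReal.ofReal q * (ENNReal.ofReal q *
            (ENNReal.ofReal q * ENNReal.ofReal q)))) :=
          mul_le_mul' e1 (mul_le_mul' e2 (mul_le_mul' e3 (mul_le_mul' e4 (mul_le_mul' e5 e6))))
      _ = ENNReal.ofReal q ^ 6 := by ring
  -- the measure of the bad event
  have hBadMeas : (M n hn).μ Bad ≤ ENNReal.ofReal (((n:ℝ) ^ 2)⁻¹) := by
    have hcard : (S.card : ENNReal) ≤ ((n : ENNReal)) ^ 3 := by
      have h1 : S.card ≤ n ^ 3 := by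
        rw [hS_def]
        refine le_trans (Finset.card_filter_le _ _) ?_
        refine le_of_eq ?_
        simp only [Finset.card_univ, Fintype.card_prod, Fintype.card_fin]
        ring
      calc (S.card : ENNReal) ≤ ((n ^ 3 : ℕ) : ENNReal) := by exact_mod_cast h1
        _ = (n : ENNReal) ^ 3 := by push_cast; ring
    calc (M n hn).μ Bad ≤ (M n hn).μ (⋃ t ∈ (S : Set (Fin n × Fin n × Fin n)), F t) :=
          measure_mono hBadSub
      _ ≤ ∑ t ∈ S, (M n hn).μ (F t) := measure_biUnion_finset_le _ _
      _ ≤ ∑ _t ∈ S, ENNReal.ofReal q ^ 6 := Finset.sum_le_sum hFt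
      _ = S.card * ENNReal.ofReal q ^ 6 := by rw [Finset.sum_const, nsmul_eq_mul]
      _ ≤ (n : ENNReal) ^ 3 * ENNReal.ofReal q ^ 6 := mul_le_mul_left hcard _
      _ = ENNReal.ofReal ((n:ℝ) ^ 3 * q ^ 6) := by
          rw [ENNReal.ofReal_mul (by positivity), ENNReal.ofReal_pow hq.le,
            ENNReal.ofReal_pow (Nat.cast_nonneg n), ENNReal.ofReal_natCast]
      _ ≤ ENNReal.ofReal (((n:ℝ) ^ 2)⁻¹) := ENNReal.ofReal_le_ofReal hnum
  -- conclusion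
  have h1 : (1 : ENNReal) ≤ (M n hn).μ Gd + (M n hn).μ Bad := by
    calc (1 : ENNReal) = (M n hn).μ Set.univ := measure_univ.symm
      _ ≤ (M n hn).μ (Gd ∪ Bad) := measure_mono (fun ω _ => by
          rcases le_or_gt (((((M n hn).G 0 ω).neighborSet u ∩
            ((M n hn).G 1 ω).neighborSet v ∩ T)).ncard) 2 with h | h
          · exact Or.inl h
          · exact Or.inr h)
      _ ≤ (M n hn).μ Gd + (M n hn).μ Bad := measure_union_le _ _
  have h2 : (1 : ENNReal) ≤ (M n hn).μ Gd + ENNReal.ofReal (((n:ℝ) ^ 2)⁻¹) :=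
    h1.trans (add_le_add_right hBadMeas _)
  have hfin : (M n hn).μ Gd ≠ ⊤ := measure_ne_top _ _
  have h3 := ENNReal.toReal_mono
    (ENNReal.add_ne_top.mpr ⟨hfin, ENNReal.ofReal_ne_top⟩) h2
  rw [ENNReal.toReal_one, ENNReal.toReal_add hfin ENNReal.ofReal_ne_top,
    ENNReal.toReal_ofReal (by positivity)] at h3
  linarith
end
end

section
/- There exists N such that for all n ≥ N and every vertex u ∈ P₀: P( |Γ₁^{G₁}(u) ∩ Γ₁^{G₂}(u) ∩ P_{k*}| ≥ C·α_{k*}^{2−β}·α₀·s²/(8·w̄) ) ≥ 1 − n^{−4}. -/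
open MeasureTheory ProbabilityTheory Filter

noncomputable section

section Helpers

variable {Ω : Type} [MeasurableSpace Ω] {μ : MeasureTheory.Measure Ω}

lemma helper_iIndepSet_group {ι K V : Type*} [Fintype K]
    (f : ι × K → Set Ω) (hmeas : ∀ p, MeasurableSet (f p))
    (hind : iIndepSet f μ)
    (g : V → ι) (hg : Function.Injective g) :
    iIndepSet (fun v : V => ⋂ o : K, f (g v, o)) μ := by
  classical
  set pp : V → Set (Set Ω) := fun v => {S | ∃ T : Finset K, S = ⋂ o ∈ T, f (g v, o)} with hppdef
  have hinj2 : ∀ v : V, Function.Injective (fun o : K => (g v, o)) := by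
    intro v a b h
    exact (Prod.ext_iff.1 h).2
  have hprod : ∀ (v : V) (T : Finset K),
      μ (⋂ o ∈ T, f (g v, o)) = ∏ o ∈ T, μ (f (g v, o)) := by
    intro v T
    have h1 : (⋂ o ∈ T, f (g v, o)) = ⋂ p ∈ T.image (fun o => (g v, o)), f p := by
      ext x; simp
    rw [h1, hind.meas_biInter, Finset.prod_image (fun a _ b _ h => hinj2 v h)]
  have hps : iIndepSets pp μ := by
    rw [iIndepSets_iff]
    intro S F hF
    have hch : ∀ v, ∃ T : Finset K, v ∈ S → F v = ⋂ o ∈ T, f (g v, o) := by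
      intro v
      by_cases hv : v ∈ S
      · obtain ⟨T, hT⟩ := hF v hv; exact ⟨T, fun _ => hT⟩
      · exact ⟨∅, fun h => absurd h hv⟩
    choose T hT using hch
    have h1 : (⋂ v ∈ S, F v) = ⋂ p ∈ S.biUnion (fun v => (T v).image (fun o => (g v, o))), f p := by
      ext x
      simp only [Set.mem_iInter, Finset.mem_biUnion, Finset.mem_image]
      constructor
      · rintro h p ⟨v, hv, o, ho, rfl⟩
        have h2 := h v hv
        rw [hT v hv] at h2
        simp only [Set.mem_iInter] at h2
        exact h2 o ho
      · intro h v hv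
        rw [hT v hv]
        simp only [Set.mem_iInter]
        exact fun o ho => h _ ⟨v, hv, o, ho, rfl⟩
    have hdisj : Set.PairwiseDisjoint (↑S) (fun v => (T v).image (fun o : K => (g v, o))) := by
      intro a _ b _ hab
      simp only [Finset.disjoint_left, Finset.mem_image]
      rintro p ⟨o1, _, rfl⟩ ⟨o2, _, hp⟩
      exact hab ((hg (Prod.ext_iff.1 hp).1).symm)
    rw [h1, hind.meas_biInter, Finset.prod_biUnion hdisj]
    refine Finset.prod_congr rfl fun v hv => ?_
    rw [Finset.prod_image (fun a _ b _ h => hinj2 v h), ← hprod, ← hT v hv]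
  refine ProbabilityTheory.iIndepSets.iIndepSet_of_mem ?_ (fun v => MeasurableSet.iInter fun o => hmeas _) hps
  exact fun v => ⟨Finset.univ, by ext x; simp⟩

lemma mgf_indicator_eq {E : Set Ω} (hE : MeasurableSet E) [IsProbabilityMeasure μ] (t : ℝ) :
    mgf (E.indicator fun _ => (1:ℝ)) μ t = 1 + (μ E).toReal * (Real.exp t - 1) := by
  have hpt : (fun ω => Real.exp (t * (E.indicator fun _ => (1:ℝ)) ω))
      = fun ω => 1 + E.indicator (fun _ => Real.exp t - 1) ω := by
    funext ω
    by_cases h : ω ∈ E <;> simp [h]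
  rw [mgf, hpt, integral_add (integrable_const 1) ((integrable_const _).indicator hE),
    integral_const, integral_indicator_const _ hE]
  simp [mul_comm, Measure.real]

lemma chernoff_indicator {ι : Type*} [IsProbabilityMeasure μ]
    (E : ι → Set Ω) (hmeas : ∀ v, MeasurableSet (E v))
    (hind : iIndepSet E μ) (V : Finset ι) (r a : ℝ) (hr : 1 < r)
    (hQ : r * a ≤ ∑ v ∈ V, (μ (E v)).toReal) :
    (μ {ω | (∑ v ∈ V, (E v).indicator (fun _ => (1:ℝ)) ω) ≤ a}).toReal
      ≤ Real.exp (-((r - 1 - Real.log r) * a)) := by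
  classical
  have hr0 : (0:ℝ) < r := lt_trans one_pos hr
  set X : ι → Ω → ℝ := fun v => (E v).indicator fun _ => 1 with hX
  set t : ℝ := -Real.log r with htdef
  have ht : t ≤ 0 := neg_nonpos.2 (Real.log_nonneg hr.le)
  have het : Real.exp t = r⁻¹ := by rw [htdef, Real.exp_neg, Real.exp_log hr0]
  have hXmeas : ∀ v, Measurable (X v) := fun v => measurable_const.indicator (hmeas v)
  have hXrw : ∀ v, (fun ω => Real.exp (t * X v ω))
      = fun ω => 1 + (E v).indicator (fun _ => Real.exp t - 1) ω := by
    intro v; funext ω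
    by_cases h : ω ∈ E v <;> simp [hX, h]
  have hint : ∀ v ∈ V, Integrable (fun ω => Real.exp (t * X v ω)) μ := by
    intro v _
    rw [hXrw v]
    exact (integrable_const 1).add ((integrable_const _).indicator (hmeas v))
  have hindf : iIndepFun X μ := hind.iIndepFun_indicator
  have hsum_int : Integrable (fun ω => Real.exp (t * (∑ v ∈ V, X v) ω)) μ :=
    iIndepFun.integrable_exp_mul_sum hindf hXmeas hint
  have hcher := measure_le_le_exp_mul_mgf (X := ∑ v ∈ V, X v) a ht hsum_int
  rw [hindf.mgf_sum hXmeas V] at hcher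
  have hset : {ω | (∑ v ∈ V, X v) ω ≤ a} = {ω | (∑ v ∈ V, (E v).indicator (fun _ => (1:ℝ)) ω) ≤ a} := by
    ext ω; simp [hX, Finset.sum_apply]
  rw [hset] at hcher
  refine hcher.trans ?_
  -- bound the product of mgfs
  have hple : ∀ v, (μ (E v)).toReal ≤ 1 := by
    intro v
    have := ENNReal.toReal_mono (measure_ne_top μ _) (measure_mono (Set.subset_univ (E v)))
    simpa using this
  have hp0 : ∀ v, 0 ≤ (μ (E v)).toReal := fun v => ENNReal.toReal_nonneg
  have hfac : ∀ v ∈ V, mgf (X v) μ t ≤ Real.exp ((μ (E v)).toReal * (Real.exp t - 1)) := by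
    intro v _
    rw [mgf_indicator_eq (hmeas v) t, add_comm]
    exact Real.add_one_le_exp _
  have hfac0 : ∀ v ∈ V, 0 ≤ mgf (X v) μ t := by
    intro v _
    rw [mgf_indicator_eq (hmeas v) t]
    have h1 : Real.exp t ≤ 1 := Real.exp_le_one_iff.mpr ht
    have h2 : (μ (E v)).toReal * (1 - Real.exp t) ≤ 1 := by
      have : (μ (E v)).toReal * (1 - Real.exp t) ≤ 1 * 1 :=
        mul_le_mul (hple v) (by have := Real.exp_pos t; linarith) (by linarith) one_pos.le
      linarith
    nlinarith
  have hprod : (∏ v ∈ V, mgf (X v) μ t) ≤ Real.exp (∑ v ∈ V, (μ (E v)).toReal * (Real.exp t - 1)) := by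
    rw [Real.exp_sum]
    exact Finset.prod_le_prod hfac0 hfac
  calc Real.exp (-t * a) * ∏ v ∈ V, mgf (X v) μ t
      ≤ Real.exp (-t * a) * Real.exp (∑ v ∈ V, (μ (E v)).toReal * (Real.exp t - 1)) := by
        exact mul_le_mul_of_nonneg_left hprod (Real.exp_pos _).le
    _ = Real.exp (-t * a + (∑ v ∈ V, (μ (E v)).toReal) * (Real.exp t - 1)) := by
        rw [← Real.exp_add, Finset.sum_mul]
    _ ≤ Real.exp (-((r - 1 - Real.log r) * a)) := by
        apply Real.exp_le_exp.2
        have h1 : Real.exp t - 1 ≤ 0 := by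
          have := Real.exp_le_one_iff.mpr ht; linarith
        have h2 : (∑ v ∈ V, (μ (E v)).toReal) * (Real.exp t - 1) ≤ (r * a) * (Real.exp t - 1) :=
          mul_le_mul_of_nonpos_right hQ h1
        have hrne : (r:ℝ) ≠ 0 := hr0.ne'
        have h5 : (r * a) * (Real.exp t - 1) = (1 - r) * a := by
          rw [het]; field_simp
        have h7 : -t * a = Real.log r * a := by rw [htdef]; ring
        linarith [h2, h5, h7]
    

lemma count_interval_lower {n : ℕ} {i0 L R : ℝ} (F : Finset (Fin n))
    (hF : ∀ i : Fin n, L ≤ ((i:ℕ):ℝ) + 1 + i0 → ((i:ℕ):ℝ) + 1 + i0 ≤ R → i ∈ F)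
    (hL0 : 0 ≤ L - 1 - i0) (hLR : L ≤ R)
    (hRn : R - 1 - i0 ≤ (n:ℝ) - 1) :
    R - L - 1 ≤ (F.card : ℝ) := by
  classical
  set a := ⌈L - 1 - i0⌉₊ with ha
  set b := ⌊R - 1 - i0⌋₊ with hb
  have hR0 : 0 ≤ R - 1 - i0 := le_trans hL0 (by linarith)
  have hbR : (b:ℝ) ≤ R - 1 - i0 := Nat.floor_le hR0
  have haL : L - 1 - i0 ≤ (a:ℝ) := Nat.le_ceil _
  have hab2 : (a:ℝ) < L - 1 - i0 + 1 := Nat.ceil_lt_add_one hL0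
  have hbR2 : R - 1 - i0 - 1 < (b:ℝ) := Nat.sub_one_lt_floor _
  have hbn : b < n := by
    have h1 : (b:ℝ) < (n:ℝ) := by linarith
    exact_mod_cast h1
  have hcard : (Finset.Icc a b).card ≤ F.card := by
    apply Finset.card_le_card_of_injOn (fun m => (⟨m % n, Nat.mod_lt _ (Nat.zero_lt_of_lt hbn)⟩ : Fin n))
    · intro m hm
      rw [Finset.mem_coe, Finset.mem_Icc] at hm
      have hmn : m < n := lt_of_le_of_lt hm.2 hbn
      have hmod : m % n = m := Nat.mod_eq_of_lt hmn
      have h1 : (a:ℝ) ≤ (m:ℝ) := by exact_mod_cast hm.1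
      have h2 : (m:ℝ) ≤ (b:ℝ) := by exact_mod_cast hm.2
      rw [Finset.mem_coe]
      apply hF
      · simp only [hmod]; linarith
      · simp only [hmod]; linarith
    · intro x hx y hy hxy
      simp only [Finset.coe_Icc, Set.mem_Icc] at hx hy
      have hv : x % n = y % n := congrArg Fin.val hxy
      rwa [Nat.mod_eq_of_lt (lt_of_le_of_lt hx.2 hbn),
        Nat.mod_eq_of_lt (lt_of_le_of_lt hy.2 hbn)] at hv
  rcases le_or_gt a (b+1) with hab | hab
  · have hIcc : ((Finset.Icc a b).card : ℝ) = (b:ℝ) + 1 - a := by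
      rw [Nat.card_Icc, Nat.cast_sub hab]
      push_cast; ring
    have := (Nat.cast_le (α := ℝ)).2 hcard
    rw [hIcc] at this
    linarith
  · have h1 : (b:ℝ) + 1 < (a:ℝ) := by exact_mod_cast hab
    have h2 : R - L - 1 < 0 := by linarith
    have h3 : (0:ℝ) ≤ (F.card : ℝ) := Nat.cast_nonneg _
    linarith

lemma weight_le_iff {c n x al b : ℝ} (hc : 0 < c) (hn : 0 < n) (hx : 0 < x)
    (hal : 0 < al) (hb : 0 < b) :
    (al ≤ c * (n / x) ^ ((1:ℝ) / b) ↔ x ≤ n * (c / al) ^ b) ∧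
    (c * (n / x) ^ ((1:ℝ) / b) ≤ al ↔ n * (c / al) ^ b ≤ x) := by
  have hnx : (0:ℝ) < n / x := div_pos hn hx
  have hac : (0:ℝ) < al / c := div_pos hal hc
  have hacb : (0:ℝ) < (al / c) ^ b := Real.rpow_pos_of_pos hac b
  have hkey : n * (c / al) ^ b = n / (al / c) ^ b := by
    rw [← inv_div al c, Real.inv_rpow hac.le, ← div_eq_mul_inv]
  constructor
  · rw [hkey]
    constructor
    · intro h
      have h1 : al / c ≤ (n / x) ^ ((1:ℝ) / b) := (div_le_iff₀' hc).2 h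
      rw [one_div] at h1
      have h2 : (al / c) ^ b ≤ n / x := (Real.le_rpow_inv_iff_of_pos hac.le hnx.le hb).1 h1
      rw [le_div_iff₀ hx] at h2
      rw [le_div_iff₀ hacb]
      linarith [h2]
    · intro h
      rw [le_div_iff₀ hacb] at h
      have h2 : (al / c) ^ b ≤ n / x := by rw [le_div_iff₀ hx]; linarith
      have h1 : al / c ≤ (n / x) ^ ((1:ℝ) / b) := by
        rw [one_div]
        exact (Real.le_rpow_inv_iff_of_pos hac.le hnx.le hb).2 h2
      exact (div_le_iff₀' hc).1 h1
  · rw [hkey]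
    constructor
    · intro h
      have h1 : (n / x) ^ ((1:ℝ) / b) ≤ al / c := (le_div_iff₀' hc).2 h
      rw [one_div] at h1
      have h2 : n / x ≤ (al / c) ^ b := (Real.rpow_inv_le_iff_of_pos hnx.le hac.le hb).1 h1
      rw [div_le_iff₀ hx] at h2
      rw [div_le_iff₀ hacb]
      linarith
    · intro h
      rw [div_le_iff₀ hacb] at h
      have h2 : n / x ≤ (al / c) ^ b := by rw [div_le_iff₀ hx]; linarith
      have h1 : (n / x) ^ ((1:ℝ) / b) ≤ al / c := by
        rw [one_div]
        exact (Real.rpow_inv_le_iff_of_pos hnx.le hac.le hb).2 h2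
      exact (le_div_iff₀' hc).1 h1

lemma ev_const_rpow (K a M : ℝ) (hK : 0 < K) (ha : 0 < a) :
    ∀ᶠ n : ℕ in atTop, M ≤ K * (n:ℝ) ^ a := by
  have h := ((tendsto_rpow_atTop ha).const_mul_atTop hK).comp
    tendsto_natCast_atTop_atTop (α := ℕ)
  exact h.eventually_ge_atTop M

lemma ev_log_rpow (K ee M : ℝ) (hK : 0 < K) (he : 0 < ee) :
    ∀ᶠ n : ℕ in atTop, M ≤ (Real.log n / K) ^ ee := by
  have h1 : Tendsto (fun n : ℕ => Real.log n) atTop atTop :=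
    Real.tendsto_log_atTop.comp tendsto_natCast_atTop_atTop
  have h2 : Tendsto (fun n : ℕ => Real.log n / K) atTop atTop := h1.atTop_div_const hK
  exact ((tendsto_rpow_atTop he).comp h2).eventually_ge_atTop M

lemma ev_rpow_log (K ee gam M : ℝ) (hK : 0 < K) (he : 0 < ee) (hg : 0 < gam) :
    ∀ᶠ n : ℕ in atTop, M ≤ (n:ℝ) ^ gam * (K / Real.log n) ^ ee := by
  set M' : ℝ := max M 1 with hM'
  have hM'0 : 0 < M' := lt_of_lt_of_le one_pos (le_max_right _ _)
  have hKe : 0 < K ^ ee := Real.rpow_pos_of_pos hK ee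
  have hlo := isLittleO_log_rpow_rpow_atTop ee hg
  have hb := hlo.def (div_pos hKe hM'0)
  have hbn : ∀ᶠ x : ℝ in atTop, ‖Real.log x ^ ee‖ ≤ K ^ ee / M' * ‖x ^ gam‖ := hb
  have hx1 : ∀ᶠ x : ℝ in atTop, (1:ℝ) ≤ Real.log x :=
    Real.tendsto_log_atTop.eventually_ge_atTop 1
  have hcomb := hbn.and (hx1.and (eventually_gt_atTop (0:ℝ)))
  have hreal : ∀ᶠ x : ℝ in atTop, M ≤ x ^ gam * (K / Real.log x) ^ ee := by
    filter_upwards [hcomb] with x ⟨h1, h2, h3⟩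
    have hlx : (0:ℝ) < Real.log x := lt_of_lt_of_le one_pos h2
    have hlxe : (0:ℝ) < Real.log x ^ ee := Real.rpow_pos_of_pos hlx ee
    have hxg : (0:ℝ) < x ^ gam := Real.rpow_pos_of_pos h3 gam
    rw [Real.norm_eq_abs, Real.norm_eq_abs, abs_of_nonneg hlxe.le, abs_of_nonneg hxg.le] at h1
    have hdr : (K / Real.log x) ^ ee = K ^ ee / Real.log x ^ ee :=
      Real.div_rpow hK.le hlx.le ee
    rw [hdr]
    have h4 : M' * Real.log x ^ ee ≤ K ^ ee * x ^ gam := by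
      have := mul_le_mul_of_nonneg_left h1 hM'0.le
      calc M' * Real.log x ^ ee ≤ M' * (K ^ ee / M' * x ^ gam) := this
        _ = K ^ ee * x ^ gam := by field_simp
    have h5 : M' ≤ x ^ gam * (K ^ ee / Real.log x ^ ee) := by
      rw [mul_div_assoc'] at *
      rw [le_div_iff₀ hlxe]
      linarith [h4]
    calc M ≤ M' := le_max_left _ _
      _ ≤ _ := h5
  exact tendsto_natCast_atTop_atTop.eventually hreal

end Helpers

set_option maxHeartbeats 2000000 in
theorem statement_16
    (wbar β s γ : ℝ) (hwbar : 0 < wbar) (hβl : 2 < β) (hβu : β < 3)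
    (hs0 : 0 < s) (hs1 : s ≤ 1) (hγ0 : 0 < γ) (hγh : γ < 1/2)
    (wmax : ℕ → ℝ)
    (hwmax : ∀ n : ℕ, 2 ≤ n →
      wbar ≤ wmax n ∧ wmax n ≤ Real.sqrt (n * wbar) ∧ (n : ℝ) ^ γ ≤ wmax n)
    (Ω : ℕ → Type) [∀ n, MeasurableSpace (Ω n)]
    (M : ∀ n : ℕ, 2 ≤ n → ChungLuPair wbar β s wmax n (Ω n))
 :
    ∃ N : ℕ, ∀ (n : ℕ) (hn : 2 ≤ n), N ≤ n →
      ∀ u : Fin n, (n : ℝ) ^ γ ≤ clWeight wbar β wmax n u →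
      1 - ((n : ℝ) ^ 4)⁻¹ ≤
        ((M n hn).μ {ω |
          Cconst wbar β * alphaZ γ n (kstar wbar β s γ n) ^ (2 - β) * alphaZ γ n 0 * s ^ 2 /
              (8 * wbar) ≤
            ((((M n hn).G 0 ω).neighborSet u ∩ ((M n hn).G 1 ω).neighborSet u ∩
              PsliceZ wbar β γ wmax n (kstar wbar β s γ n)).ncard : ℝ)}).toReal := by
  classical
  have hβ2 : (0:ℝ) < β - 2 := by linarith
  have hβ1 : (0:ℝ) < β - 1 := by linarith
  have hβ3 : (0:ℝ) < 3 - β := by linarith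
  set c : ℝ := wbar * ((β - 2) / (β - 1)) with hcdef
  have hc0 : 0 < c := mul_pos hwbar (div_pos hβ2 hβ1)
  have hCb : (β - 2) * wbar / (β - 1) = c := by rw [hcdef]; ring
  have h2b1 : (1:ℝ) < (2:ℝ) ^ (β - 1) := by
    calc (1:ℝ) = (2:ℝ) ^ (0:ℝ) := (Real.rpow_zero 2).symm
    _ < _ := Real.rpow_lt_rpow_of_exponent_lt one_lt_two (by linarith)
  have hC0 : 0 < Cconst wbar β := by
    rw [Cconst, hCb]
    exact mul_pos (by linarith) (Real.rpow_pos_of_pos hc0 _)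
  set r : ℝ := (2:ℝ) ^ (3 - β) with hrdef
  have hr1 : 1 < r := by
    rw [hrdef]
    calc (1:ℝ) = (2:ℝ) ^ (0:ℝ) := (Real.rpow_zero 2).symm
    _ < _ := Real.rpow_lt_rpow_of_exponent_lt one_lt_two (by linarith)
  have hr0 : (0:ℝ) < r := lt_trans one_pos hr1
  set rho : ℝ := r - 1 - Real.log r with hrhodef
  have hrho0 : 0 < rho := by
    have := Real.log_lt_sub_one_of_pos hr0 hr1.ne'
    rw [hrhodef]; linarith
  set ee : ℝ := 1 / (3 - β) with heedef
  have hee0 : 0 < ee := by rw [heedef]; positivity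
  set c5 : ℝ := Cconst wbar β * s ^ 2 / (192 * wbar) with hc5def
  have hc50 : 0 < c5 := by rw [hc5def]; positivity
  set q2 : ℝ := (1/2) * (β - 1) with hq2def
  -- the eventual conditions
  have hevent : ∀ᶠ m : ℕ in atTop, (3 ≤ m ∧
      (2 * max 4 (1/(6*rho)) ≤ (m:ℝ) ^ γ * (c5 / Real.log m) ^ ee ∧
      (max c 1 ≤ (Real.log m / c5) ^ ee ∧
      ((1:ℝ) ≤ (c ^ (β-1) / wbar ^ q2) * (m:ℝ) ^ (1 - q2) ∧
      (4:ℝ) ≤ (Cconst wbar β * (2:ℝ) ^ (1-β)) * (m:ℝ) ^ (1 + γ*(1-β)))))) := by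
    have E1 : ∀ᶠ m : ℕ in atTop, 3 ≤ m := eventually_ge_atTop 3
    have E2 := ev_rpow_log c5 ee γ (2 * max 4 (1/(6*rho))) hc50 hee0 hγ0
    have E3 := ev_log_rpow c5 ee (max c 1) hc50 hee0
    have E4 := ev_const_rpow (c ^ (β-1) / wbar ^ q2) (1 - q2) 1
      (by positivity) (by rw [hq2def]; linarith)
    have hprod : γ * (β - 1) < 1 := by
      have h := mul_lt_mul'' hγh (show β - 1 < 2 by linarith) hγ0.le (by linarith)
      linarith [h]
    have E5 := ev_const_rpow (Cconst wbar β * (2:ℝ) ^ (1-β)) (1 + γ*(1-β)) 4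
      (by positivity) (by have h2 : γ*(1-β) = -(γ*(β-1)) := by ring
                          linarith [hprod])
    exact E1.and (E2.and (E3.and (E4.and E5)))
  rw [Filter.eventually_atTop] at hevent
  obtain ⟨N, hN⟩ := hevent
  refine ⟨N, ?_⟩
  intro n hn hNn u hu
  obtain ⟨h3n, hP2, hP3, hP4, hP5⟩ := hN n hNn
  set M' := M n hn with hM'def
  haveI : IsProbabilityMeasure M'.μ := M'.prob
  have hn0 : (0:ℝ) < n := by
    have : (0:ℕ) < n := by omega
    exact_mod_cast this
  have hn1 : (1:ℝ) < n := by
    have : (1:ℕ) < n := by omega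
    exact_mod_cast this
  have hlogn : 0 < Real.log n := Real.log_pos hn1
  obtain ⟨hwm1, hwm2, hwm3⟩ := hwmax n hn
  have hwm0 : 0 < wmax n := lt_of_lt_of_le hwbar hwm1
  set w : Fin n → ℝ := clWeight wbar β wmax n with hwdef
  set i0 : ℝ := (n:ℝ) * (c / wmax n) ^ (β - 1) with hi0def
  have hi00 : 0 ≤ i0 := by rw [hi0def]; positivity
  have hbase : (β - 2) * wbar / ((β - 1) * wmax n) = c / wmax n := by
    rw [hcdef]; field_simp
  have hwform : ∀ i : Fin n, w i = c * ((n:ℝ) / (((i:ℕ):ℝ) + 1 + i0)) ^ ((1:ℝ)/(β-1)) := by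
    intro i
    rw [hwdef, clWeight, hbase, ← hcdef, ← hi0def]
  have hx0 : ∀ i : Fin n, (0:ℝ) < ((i:ℕ):ℝ) + 1 + i0 := by
    intro i
    have : (0:ℝ) ≤ ((i:ℕ):ℝ) := Nat.cast_nonneg _
    linarith
  have hwpos : ∀ i : Fin n, 0 < w i := fun i => by
    rw [hwform i]
    exact mul_pos hc0 (Real.rpow_pos_of_pos (div_pos hn0 (hx0 i)) _)
  -- k* and alpha
  set k : ℤ := kstar wbar β s γ n with hkdef
  set alp : ℝ := alphaZ γ n k with halpdef
  have h2k0 : (0:ℝ) < (2:ℝ) ^ k := zpow_pos (by norm_num) k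
  have hng0 : (0:ℝ) < (n:ℝ) ^ γ := Real.rpow_pos_of_pos hn0 γ
  have halp0 : 0 < alp := by rw [halpdef, alphaZ]; positivity
  set D : ℝ := (c5 / Real.log n) ^ ee with hDdef
  have hD0 : 0 < D := by rw [hDdef]; positivity
  set y : ℝ := (n:ℝ) ^ γ * D with hydef
  have hy0 : 0 < y := mul_pos hng0 hD0
  have hkst : k = ⌊Real.logb 2 y⌋ := by
    rw [hkdef]
    unfold kstar
    rw [hydef, hDdef,
      show (c5 / Real.log n) ^ ee = (Cconst wbar β * s ^ 2 / (192 * wbar * Real.log n)) ^ (1/(3-β))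
        from by rw [hc5def, heedef, div_div]]
  have h2k_le : (2:ℝ) ^ k ≤ y := by
    calc (2:ℝ) ^ k = (2:ℝ) ^ ((k:ℤ):ℝ) := (Real.rpow_intCast 2 k).symm
    _ ≤ (2:ℝ) ^ Real.logb 2 y := by
        apply Real.rpow_le_rpow_of_exponent_le one_le_two
        rw [hkst]; exact_mod_cast Int.floor_le _
    _ = y := Real.rpow_logb two_pos (by norm_num) hy0
  have h2k_ge : y / 2 ≤ (2:ℝ) ^ k := by
    calc y / 2 = (2:ℝ) ^ Real.logb 2 y / (2:ℝ) ^ (1:ℝ) := by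
          rw [Real.rpow_logb two_pos (by norm_num) hy0, Real.rpow_one]
    _ = (2:ℝ) ^ (Real.logb 2 y - 1) := (Real.rpow_sub two_pos _ _).symm
    _ ≤ (2:ℝ) ^ ((k:ℤ):ℝ) := by
        apply Real.rpow_le_rpow_of_exponent_le one_le_two
        rw [hkst]
        have := Int.sub_one_lt_floor (Real.logb 2 y)
        push_cast
        linarith
    _ = (2:ℝ) ^ k := Real.rpow_intCast 2 k
  have hmax2k : max 4 (1/(6*rho)) ≤ (2:ℝ) ^ k := by
    have : max 4 (1/(6*rho)) ≤ y / 2 := by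
      rw [hydef]; linarith [hP2]
    linarith [h2k_ge]
  have h2k4 : (4:ℝ) ≤ (2:ℝ) ^ k := le_trans (le_max_left _ _) hmax2k
  have h2krho : 1/(6*rho) ≤ (2:ℝ) ^ k := le_trans (le_max_right _ _) hmax2k
  have halpA : (Real.log n / c5) ^ ee ≤ alp := by
    have h1 : (n:ℝ) ^ γ / y ≤ alp := by
      rw [halpdef, alphaZ]
      exact div_le_div_of_nonneg_left hng0.le h2k0 h2k_le
    have h2 : (n:ℝ) ^ γ / y = D⁻¹ := by
      rw [hydef]; field_simp
    have h3 : D⁻¹ = (Real.log n / c5) ^ ee := by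
      rw [hDdef, ← Real.inv_rpow (by positivity), inv_div]
    rw [← h3, ← h2]; exact h1
  have halpc : c ≤ alp := le_trans (le_trans (le_max_left c 1) hP3) halpA
  have halp1 : (1:ℝ) ≤ alp := le_trans (le_trans (le_max_right c 1) hP3) halpA
  have halpn : alp ≤ (n:ℝ) ^ γ := by
    rw [halpdef, alphaZ]
    calc (n:ℝ) ^ γ / (2:ℝ) ^ k ≤ (n:ℝ) ^ γ / 1 :=
      div_le_div_of_nonneg_left hng0.le one_pos (by linarith)
    _ = (n:ℝ) ^ γ := div_one _
  have h4alp : 4 * alp ≤ (n:ℝ) ^ γ := by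
    have h1 : 4 * alp ≤ (2:ℝ) ^ k * alp := mul_le_mul_of_nonneg_right h2k4 halp0.le
    have h2 : (2:ℝ) ^ k * alp = (n:ℝ) ^ γ := by
      rw [halpdef, alphaZ]; field_simp
    linarith
  have halp3b : Real.log n / c5 ≤ alp ^ (3-β) := by
    have h1 : ((Real.log n / c5) ^ ee) ^ (3-β) ≤ alp ^ (3-β) :=
      Real.rpow_le_rpow (by positivity) halpA hβ3.le
    have h2 : ((Real.log n / c5) ^ ee) ^ (3-β) = Real.log n / c5 := by
      rw [← Real.rpow_mul (by positivity), heedef]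
      rw [show 1/(3-β) * (3-β) = 1 by field_simp]
      exact Real.rpow_one _
    rw [← h2]; exact h1
  -- lower bound on T
  set T : ℝ := Cconst wbar β * alp ^ (2-β) * alphaZ γ n 0 * s ^ 2 / (8 * wbar) with hTdef
  have halpha0 : alphaZ γ n 0 = (n:ℝ) ^ γ := by
    rw [alphaZ, zpow_zero, div_one]
  have hngalp : (n:ℝ) ^ γ * alp⁻¹ = (2:ℝ) ^ k := by
    rw [halpdef, alphaZ]
    field_simp
  have hTeq : T = (Cconst wbar β * s ^ 2 / (8*wbar)) * ((2:ℝ) ^ k * alp ^ (3-β)) := by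
    rw [hTdef, halpha0, show (2-β) = (3-β) - 1 by ring, Real.rpow_sub halp0,
      Real.rpow_one, ← hngalp]
    field_simp
  have hT24 : 24 * (2:ℝ) ^ k * Real.log n ≤ T := by
    rw [hTeq]
    have hfact : Cconst wbar β * s ^ 2 / (8*wbar) * (Real.log n / c5) = 24 * Real.log n := by
      rw [hc5def]
      field_simp
      ring
    calc 24 * (2:ℝ) ^ k * Real.log n
        = (Cconst wbar β * s ^ 2 / (8*wbar)) * ((2:ℝ) ^ k * (Real.log n / c5)) := by
          rw [show (Cconst wbar β * s ^ 2 / (8*wbar)) * ((2:ℝ) ^ k * (Real.log n / c5))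
            = (Cconst wbar β * s ^ 2 / (8*wbar) * (Real.log n / c5)) * (2:ℝ) ^ k by ring,
            hfact]
          ring
    _ ≤ _ := by
        apply mul_le_mul_of_nonneg_left _ (by positivity)
        exact mul_le_mul_of_nonneg_left halp3b h2k0.le
  -- counting
  set L : ℝ := (n:ℝ) * (c / (2*alp)) ^ (β-1) with hLdef
  set R : ℝ := (n:ℝ) * (c / alp) ^ (β-1) with hRdef
  have hi01 : (1:ℝ) ≤ i0 := by
    have hsq : Real.sqrt ((n:ℝ) * wbar) = ((n:ℝ) * wbar) ^ ((1:ℝ)/2) :=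
      Real.sqrt_eq_rpow _
    have h1 : c / Real.sqrt ((n:ℝ)*wbar) ≤ c / wmax n := by
      apply div_le_div_of_nonneg_left hc0.le hwm0 hwm2
    have h2 : (c / Real.sqrt ((n:ℝ)*wbar)) ^ (β-1) ≤ (c / wmax n) ^ (β-1) :=
      Real.rpow_le_rpow (by positivity) h1 hβ1.le
    have h3 : (n:ℝ) * (c / Real.sqrt ((n:ℝ)*wbar)) ^ (β-1) ≤ i0 := by
      rw [hi0def]
      exact mul_le_mul_of_nonneg_left h2 hn0.le
    refine le_trans ?_ h3
    have h4 : (c / Real.sqrt ((n:ℝ)*wbar)) ^ (β-1)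
        = c ^ (β-1) / ((n:ℝ) ^ q2 * wbar ^ q2) := by
      rw [hsq, Real.div_rpow hc0.le (by positivity), ← Real.rpow_mul (by positivity),
        show (1:ℝ)/2 * (β-1) = q2 by rw [hq2def],
        Real.mul_rpow hn0.le hwbar.le]
    rw [h4]
    have h5 : (n:ℝ) * (c ^ (β-1) / ((n:ℝ) ^ q2 * wbar ^ q2))
        = (c ^ (β-1) / wbar ^ q2) * ((n:ℝ) / (n:ℝ) ^ q2) := by ring
    have h6 : (n:ℝ) / (n:ℝ) ^ q2 = (n:ℝ) ^ (1 - q2) := by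
      rw [Real.rpow_sub hn0, Real.rpow_one]
    rw [h5, h6]
    exact hP4
  have hLlow : 2 * i0 ≤ L := by
    have h4wm : 4 * alp ≤ wmax n := le_trans h4alp hwm3
    have h1 : 2 * (c / wmax n) ≤ c / (2*alp) := by
      rw [show 2 * (c / wmax n) = (2*c) / wmax n by ring,
        div_le_div_iff₀ hwm0 (by positivity)]
      calc 2*c*(2*alp) = c*(4*alp) := by ring
      _ ≤ c * wmax n := mul_le_mul_of_nonneg_left h4wm hc0.le
    have h2 : (2 * (c / wmax n)) ^ (β-1) ≤ (c / (2*alp)) ^ (β-1) :=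
      Real.rpow_le_rpow (by positivity) h1 hβ1.le
    have h3 : 2 * (c / wmax n) ^ (β-1) ≤ (2 * (c / wmax n)) ^ (β-1) := by
      rw [Real.mul_rpow (by norm_num) (by positivity)]
      apply mul_le_mul_of_nonneg_right _ (by positivity)
      calc (2:ℝ) = (2:ℝ) ^ (1:ℝ) := (Real.rpow_one 2).symm
      _ ≤ (2:ℝ) ^ (β-1) := Real.rpow_le_rpow_of_exponent_le one_le_two (by linarith)
    rw [hLdef, hi0def]
    calc 2 * ((n:ℝ) * (c / wmax n) ^ (β-1)) = (n:ℝ) * (2 * (c / wmax n) ^ (β-1)) := by ring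
    _ ≤ (n:ℝ) * (c / (2*alp)) ^ (β-1) := by
        apply mul_le_mul_of_nonneg_left _ hn0.le
        linarith [h2, h3]
  have hL0 : 0 ≤ L - 1 - i0 := by linarith
  have hLR : L ≤ R := by
    rw [hLdef, hRdef]
    apply mul_le_mul_of_nonneg_left _ hn0.le
    apply Real.rpow_le_rpow (by positivity) _ hβ1.le
    apply div_le_div_of_nonneg_left hc0.le halp0 (by linarith)
  have hRn : R - 1 - i0 ≤ (n:ℝ) - 1 := by
    have h1 : (c / alp) ^ (β-1) ≤ 1 := by
      apply Real.rpow_le_one (by positivity) _ hβ1.le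
      rw [div_le_one halp0]; exact halpc
    have h2 : R ≤ (n:ℝ) := by
      rw [hRdef]
      calc (n:ℝ) * (c / alp) ^ (β-1) ≤ (n:ℝ) * 1 := mul_le_mul_of_nonneg_left h1 hn0.le
      _ = (n:ℝ) := mul_one _
    linarith
  set F : Finset (Fin n) := Finset.univ.filter
      (fun i : Fin n => L ≤ ((i:ℕ):ℝ) + 1 + i0 ∧ ((i:ℕ):ℝ) + 1 + i0 ≤ R) with hFdef
  have hcount : R - L - 1 ≤ (F.card : ℝ) := by
    apply count_interval_lower F _ hL0 hLR hRn
    intro i h1 h2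
    rw [hFdef, Finset.mem_filter]
    exact ⟨Finset.mem_univ i, h1, h2⟩
  -- R - L identity
  have hRL : R - L = Cconst wbar β * (2:ℝ) ^ (1-β) * (n:ℝ) * alp ^ (1-β) := by
    have hE10 : (0:ℝ) < (2:ℝ) ^ (β-1) := Real.rpow_pos_of_pos two_pos _
    have ha10 : (0:ℝ) < alp ^ (β-1) := Real.rpow_pos_of_pos halp0 _
    have hRe : R = (n:ℝ) * (c ^ (β-1) / alp ^ (β-1)) := by
      rw [hRdef, Real.div_rpow hc0.le halp0.le]
    have hLe : L = (n:ℝ) * (c ^ (β-1) / ((2:ℝ) ^ (β-1) * alp ^ (β-1))) := by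
      rw [hLdef, Real.div_rpow hc0.le (by positivity), Real.mul_rpow (by norm_num) halp0.le]
    have h2neg : (2:ℝ) ^ (1-β) = ((2:ℝ) ^ (β-1))⁻¹ := by
      rw [show (1-β) = -(β-1) by ring, Real.rpow_neg (by norm_num)]
    have haneg : alp ^ (1-β) = (alp ^ (β-1))⁻¹ := by
      rw [show (1-β) = -(β-1) by ring, Real.rpow_neg halp0.le]
    rw [hRe, hLe, h2neg, haneg, Cconst, hCb]
    field_simp
  have hW4 : (4:ℝ) ≤ R - L := by
    rw [hRL]
    have h1 : ((n:ℝ) ^ γ) ^ (1-β) ≤ alp ^ (1-β) :=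
      Real.rpow_le_rpow_of_nonpos halp0 halpn (by linarith)
    have h2 : ((n:ℝ) ^ γ) ^ (1-β) = (n:ℝ) ^ (γ*(1-β)) := (Real.rpow_mul hn0.le _ _).symm
    have h3 : (Cconst wbar β * (2:ℝ) ^ (1-β)) * (n:ℝ) ^ (1 + γ*(1-β))
        ≤ Cconst wbar β * (2:ℝ) ^ (1-β) * (n:ℝ) * alp ^ (1-β) := by
      rw [Real.rpow_add hn0, Real.rpow_one]
      calc (Cconst wbar β * (2:ℝ) ^ (1-β)) * ((n:ℝ) * (n:ℝ) ^ (γ*(1-β)))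
          = Cconst wbar β * (2:ℝ) ^ (1-β) * (n:ℝ) * (n:ℝ) ^ (γ*(1-β)) := by ring
      _ ≤ _ := by
          apply mul_le_mul_of_nonneg_left _ (by positivity)
          rw [← h2]; exact h1
    exact le_trans hP5 h3
  set V : Finset (Fin n) := F.erase u with hVdef
  have hVcard : (R - L)/2 ≤ (V.card : ℝ) := by
    have h1 : F.card ≤ V.card + 1 := by
      rw [hVdef]
      calc F.card ≤ (insert u (F.erase u)).card :=
            Finset.card_le_card (Finset.subset_insert_iff.2 (Finset.Subset.refl _))
      _ ≤ (F.erase u).card + 1 := Finset.card_insert_le _ _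
    have h2 : (F.card : ℝ) ≤ (V.card : ℝ) + 1 := by exact_mod_cast h1
    linarith [hcount]
  -- weight membership characterization
  have hweight := fun (i : Fin n) (a : ℝ) (ha : 0 < a) =>
    weight_le_iff (c := c) (n := (n:ℝ)) (x := ((i:ℕ):ℝ) + 1 + i0) (al := a) (b := β - 1)
      hc0 hn0 (hx0 i) ha hβ1
  have halpha2 : alphaZ γ n (k-1) = 2 * alp := by
    rw [alphaZ, halpdef, alphaZ, zpow_sub_one₀ (two_ne_zero) k]
    field_simp
  have hslice : ∀ v : Fin n, v ∈ F → v ∈ PsliceZ wbar β γ wmax n k := by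
    intro v hv
    rw [hFdef, Finset.mem_filter] at hv
    obtain ⟨-, hv1, hv2⟩ := hv
    refine ⟨?_, ?_⟩
    · show alp ≤ w v
      rw [hwform v]
      exact ((hweight v alp halp0).1).2 (by rw [← hRdef]; exact hv2)
    · show w v ≤ alphaZ γ n (k-1)
      rw [halpha2, hwform v]
      exact ((hweight v (2*alp) (by linarith)).2).2 (by rw [← hLdef]; exact hv1)
  have hwge : ∀ v : Fin n, v ∈ F → alp ≤ w v := by
    intro v hv
    rw [hFdef, Finset.mem_filter] at hv
    rw [hwform v]
    exact ((hweight v alp halp0).1).2 (by rw [← hRdef]; exact hv.2.2)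
  -- the independent events
  set f : Sym2 (Fin n) × Option (Fin 2) → Set (Ω n) :=
    fun p => p.2.elim (M'.A p.1) (fun j => M'.B j p.1) with hfdef
  have hfmeas : ∀ p, MeasurableSet (f p) := by
    rintro ⟨e, o⟩
    rcases o with _ | j
    · exact M'.Ameas e
    · exact M'.Bmeas j e
  have hind0 : iIndepSet f M'.μ := M'.indep
  have hinj : Function.Injective (fun v : Fin n => Sym2.mk u v) := by
    intro a b h
    simp only at h
    rcases Sym2.eq_iff.1 h with ⟨-, h2⟩ | ⟨h1, h2⟩
    · exact h2
    · exact h2.trans h1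
  set E : Fin n → Set (Ω n) := fun v => ⋂ o : Option (Fin 2), f (Sym2.mk u v, o) with hEdef
  have hEind : iIndepSet E M'.μ := helper_iIndepSet_group f hfmeas hind0 _ hinj
  have hEmeas : ∀ v, MeasurableSet (E v) := fun v => MeasurableSet.iInter fun o => hfmeas _
  have hEmem : ∀ (ω : Ω n) (v : Fin n), ω ∈ E v ↔
      (ω ∈ M'.A (Sym2.mk u v) ∧ ω ∈ M'.B 0 (Sym2.mk u v) ∧ ω ∈ M'.B 1 (Sym2.mk u v)) := by
    intro ω v
    rw [hEdef]
    simp only [Set.mem_iInter]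
    constructor
    · intro h
      exact ⟨h none, h (some 0), h (some 1)⟩
    · rintro ⟨h1, h2, h3⟩ o
      rcases o with _ | j
      · exact h1
      · fin_cases j
        · exact h2
        · exact h3
  have hpEq : ∀ v : Fin n, v ≠ u →
      (M'.μ (E v)).toReal = (w u * w v / ((n:ℝ)*wbar)) * (s*s) := by
    intro v hvu
    have hinj2 : ∀ (a b : Option (Fin 2)),
        (Sym2.mk u v, a) = (Sym2.mk u v, b) → a = b :=
      fun a b h => (Prod.ext_iff.1 h).2
    have h1 : E v = ⋂ p ∈ (Finset.univ.image fun o : Option (Fin 2) => (Sym2.mk u v, o)), f p := by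
      rw [hEdef]
      ext x
      simp
    rw [h1, hind0.meas_biInter, Finset.prod_image (fun a _ b _ h => hinj2 a b h)]
    rw [Fintype.prod_option]
    have hne : u ≠ v := Ne.symm hvu
    have hfA : f (Sym2.mk u v, none) = M'.A (Sym2.mk u v) := rfl
    have hfB : ∀ j : Fin 2, f (Sym2.mk u v, some j) = M'.B j (Sym2.mk u v) := fun j => rfl
    rw [hfA, Fin.prod_univ_two, hfB, hfB, M'.hA u v hne, M'.hB 0 u v hne, M'.hB 1 u v hne]
    rw [ENNReal.toReal_mul, ENNReal.toReal_mul]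
    rw [ENNReal.toReal_ofReal
      (div_nonneg (mul_nonneg (hwpos u).le (hwpos v).le) (by positivity)),
      ENNReal.toReal_ofReal hs0.le]
  -- the sum of probabilities
  set q : ℝ := ((n:ℝ) ^ γ * alp / ((n:ℝ)*wbar)) * (s*s) with hqdef
  have hq0 : 0 ≤ q := by rw [hqdef]; positivity
  have hqle : ∀ v ∈ V, q ≤ (M'.μ (E v)).toReal := by
    intro v hv
    have hvu : v ≠ u := Finset.ne_of_mem_erase hv
    have hvF : v ∈ F := Finset.mem_of_mem_erase hv
    have hwv : alp ≤ w v := hwge v hvF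
    rw [hpEq v hvu, hqdef]
    apply mul_le_mul_of_nonneg_right _ (by positivity)
    have h1 : (n:ℝ) ^ γ * alp ≤ w u * w v :=
      mul_le_mul hu hwv halp0.le (hwpos u).le
    exact (div_le_div_iff_of_pos_right (by positivity)).2 h1
  have hQsum : (V.card : ℝ) * q ≤ ∑ v ∈ V, (M'.μ (E v)).toReal := by
    have h := Finset.card_nsmul_le_sum V (fun v => (M'.μ (E v)).toReal) q hqle
    simpa [nsmul_eq_mul] using h
  have hwne : wbar ≠ 0 := hwbar.ne'
  have hnne : (n:ℝ) ≠ 0 := hn0.ne'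
  have hrT : r * T = ((R - L)/2) * q := by
    have hr4 : r = 4 * (2:ℝ) ^ (1-β) := by
      rw [hrdef, show (3-β) = (1-β) + ((2:ℕ):ℝ) by push_cast; ring, Real.rpow_add two_pos,
        Real.rpow_natCast]
      ring
    have halp2 : alp ^ (2-β) = alp ^ (1-β) * alp := by
      rw [show (2-β) = (1-β) + 1 by ring, Real.rpow_add halp0, Real.rpow_one]
    rw [hTdef, halpha0, hqdef, hRL, hr4, halp2]
    field_simp
    ring
  have hQ : r * T ≤ ∑ v ∈ V, (M'.μ (E v)).toReal := by
    rw [hrT]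
    calc ((R - L)/2) * q ≤ (V.card : ℝ) * q := mul_le_mul_of_nonneg_right hVcard hq0
    _ ≤ _ := hQsum
  have hcher := chernoff_indicator E hEmeas hEind V r T hr1 hQ
  rw [← hrhodef] at hcher
  have hXmeas : Measurable (fun ω => ∑ v ∈ V, (E v).indicator (fun _ => (1:ℝ)) ω) :=
    Finset.measurable_sum V (fun v _ => measurable_const.indicator (hEmeas v))
  set Xle : Set (Ω n) := {ω | (∑ v ∈ V, (E v).indicator (fun _ => (1:ℝ)) ω) ≤ T} with hXledef
  have hXlemeas : MeasurableSet Xle := measurableSet_le hXmeas measurable_const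
  have hsub : Xleᶜ ⊆ {ω | T ≤ (((M'.G 0 ω).neighborSet u ∩ (M'.G 1 ω).neighborSet u ∩
      PsliceZ wbar β γ wmax n k).ncard : ℝ)} := by
    intro ω hω
    simp only [hXledef, Set.mem_compl_iff, Set.mem_setOf_eq, not_le] at hω
    have hXcard : (∑ v ∈ V, (E v).indicator (fun _ => (1:ℝ)) ω)
        = ((V.filter (fun v => ω ∈ E v)).card : ℝ) := by
      rw [Finset.card_filter]
      push_cast
      refine Finset.sum_congr rfl fun v _ => ?_
      rw [Set.indicator_apply]
    have hincl : ↑(V.filter (fun v => ω ∈ E v)) ⊆ ((M'.G 0 ω).neighborSet u ∩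
        (M'.G 1 ω).neighborSet u ∩ PsliceZ wbar β γ wmax n k) := by
      intro v hv
      rw [Finset.mem_coe, Finset.mem_filter] at hv
      obtain ⟨hvV, hvE⟩ := hv
      have hvu : v ≠ u := Finset.ne_of_mem_erase hvV
      have hvF : v ∈ F := Finset.mem_of_mem_erase hvV
      obtain ⟨hA, hB0, hB1⟩ := (hEmem ω v).1 hvE
      refine ⟨⟨?_, ?_⟩, hslice v hvF⟩
      · rw [SimpleGraph.mem_neighborSet]
        exact (M'.hG 0 ω u v).2 ⟨Ne.symm hvu, hA, hB0⟩
      · rw [SimpleGraph.mem_neighborSet]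
        exact (M'.hG 1 ω u v).2 ⟨Ne.symm hvu, hA, hB1⟩
    have hncard : (V.filter (fun v => ω ∈ E v)).card ≤ ((M'.G 0 ω).neighborSet u ∩
        (M'.G 1 ω).neighborSet u ∩ PsliceZ wbar β γ wmax n k).ncard := by
      rw [← Set.ncard_coe_finset]
      exact Set.ncard_le_ncard hincl (Set.toFinite _)
    rw [Set.mem_setOf_eq]
    rw [hXcard] at hω
    calc T ≤ ((V.filter (fun v => ω ∈ E v)).card : ℝ) := hω.le
    _ ≤ _ := by exact_mod_cast hncard
  have hrhoT : 4 * Real.log n ≤ rho * T := by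
    have h6 : (1:ℝ) ≤ (2:ℝ) ^ k * (6*rho) := by
      rw [div_le_iff₀ (by positivity)] at h2krho
      linarith
    have h7 : (4:ℝ) ≤ rho * (24 * (2:ℝ) ^ k) := by
      have h8 := mul_le_mul_of_nonneg_left h6 (show (0:ℝ) ≤ 4 by norm_num)
      have heq : 4*((2:ℝ)^k*(6*rho)) = rho*(24*(2:ℝ)^k) := by ring
      linarith
    calc 4 * Real.log n ≤ (rho * (24 * (2:ℝ) ^ k)) * Real.log n :=
      mul_le_mul_of_nonneg_right h7 hlogn.le
    _ = rho * (24 * (2:ℝ) ^ k * Real.log n) := by ring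
    _ ≤ rho * T := mul_le_mul_of_nonneg_left hT24 hrho0.le
  have hexp : Real.exp (-(rho * T)) ≤ (((n:ℝ)) ^ 4)⁻¹ := by
    have h1 : ((n:ℝ) ^ 4) = Real.exp (4 * Real.log n) := by
      rw [← Real.exp_log (show (0:ℝ) < (n:ℝ) ^ 4 by positivity), Real.log_pow]
      norm_num
    have h2 : Real.exp (-(rho * T)) ≤ Real.exp (-(4 * Real.log n)) := by
      apply Real.exp_le_exp.2; linarith
    rw [h1, ← Real.exp_neg]
    exact h2
  have hμc : (M'.μ Xleᶜ).toReal = 1 - (M'.μ Xle).toReal := by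
    rw [measure_compl hXlemeas (measure_ne_top _ _), measure_univ]
    rw [ENNReal.toReal_sub_of_le prob_le_one ENNReal.one_ne_top, ENNReal.toReal_one]
  calc 1 - ((n:ℝ) ^ 4)⁻¹ ≤ 1 - Real.exp (-(rho * T)) := by linarith [hexp]
  _ ≤ 1 - (M'.μ Xle).toReal := by linarith [hcher]
  _ = (M'.μ Xleᶜ).toReal := hμc.symm
  _ ≤ _ := ENNReal.toReal_mono (measure_ne_top _ _) (measure_mono hsub)
end
end
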